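/- arXiv:1208.6283 — 11 statements merged into one kernel-verified Lean document; each statement's English description precedes it below -/
import Mathlib

section
/- Let Λ be a set and let μ_φ, μ_Φ, μ_χ, μ_Ξ, μ_ψ, μ_Ψ : Λ → ℝ be nonnegative functions satisfying, pointwise on Λ: (i) the disjointness relations μ_φ·μ_Φ = μ_χ·μ_Ξ = μ_ψ·μ_Ψ = 0; (ii) the equalities μ_φ + μ_Φ = μ_χ + μ_Ξ = μ_ψ + μ_Ψ; and (iii) 3(μ_φ + μ_Φ) = 2(μ_φ + μ_χ + μ_ψ) = 2(μ_Φ + μ_Ξ + μ_Ψ). Then all six functions are identically zero. (Consequently they cannot all be probability densities, which proves Spekkens' theorem that quantum theory admits no preparation noncontextual ontological embedding.) -/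
theorem stmt_1 {Λ : Type*} (μφ μΦ μχ μΞ μψ μΨ : Λ → ℝ)
    (hφ0 : ∀ l, 0 ≤ μφ l) (hΦ0 : ∀ l, 0 ≤ μΦ l)
    (hχ0 : ∀ l, 0 ≤ μχ l) (hΞ0 : ∀ l, 0 ≤ μΞ l)
    (hψ0 : ∀ l, 0 ≤ μψ l) (hΨ0 : ∀ l, 0 ≤ μΨ l)
    -- (i) disjointness
    (hd1 : ∀ l, μφ l * μΦ l = 0)
    (hd2 : ∀ l, μχ l * μΞ l = 0)
    (hd3 : ∀ l, μψ l * μΨ l = 0)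
    -- (ii) equal pair sums
    (he1 : ∀ l, μφ l + μΦ l = μχ l + μΞ l)
    (he2 : ∀ l, μχ l + μΞ l = μψ l + μΨ l)
    -- (iii)
    (hf1 : ∀ l, 3 * (μφ l + μΦ l) = 2 * (μφ l + μχ l + μψ l))
    (hf2 : ∀ l, 2 * (μφ l + μχ l + μψ l) = 2 * (μΦ l + μΞ l + μΨ l)) :
    (∀ l, μφ l = 0) ∧ (∀ l, μΦ l = 0) ∧ (∀ l, μχ l = 0) ∧
    (∀ l, μΞ l = 0) ∧ (∀ l, μψ l = 0) ∧ (∀ l, μΨ l = 0) := by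
  have key : ∀ l, μφ l = 0 ∧ μΦ l = 0 ∧ μχ l = 0 ∧ μΞ l = 0 ∧ μψ l = 0 ∧ μΨ l = 0 := by
    intro l
    rcases mul_eq_zero.mp (hd1 l) with h1 | h1 <;>
    rcases mul_eq_zero.mp (hd2 l) with h2 | h2 <;>
    rcases mul_eq_zero.mp (hd3 l) with h3 | h3 <;>
    · have a := hφ0 l; have b := hΦ0 l; have c := hχ0 l; have d := hΞ0 l
      have e := hψ0 l; have f := hΨ0 l
      have g1 := he1 l; have g2 := he2 l; have g3 := hf1 l; have g4 := hf2 l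
      refine ⟨?_, ?_, ?_, ?_, ?_, ?_⟩ <;> linarith
  exact ⟨fun l => (key l).1, fun l => (key l).2.1, fun l => (key l).2.2.1,
    fun l => (key l).2.2.2.1, fun l => (key l).2.2.2.2.1, fun l => (key l).2.2.2.2.2⟩
end

section
/- (von Neumann's theorem, finite-dimensional form.) Let d ≥ 1 and let μ be a real-valued function on the Hermitian d×d complex matrices such that: (1) μ(αA) = α·μ(A) for every real α and Hermitian A; (2) μ(A + B) = μ(A) + μ(B) for all Hermitian A, B (commuting or not); (3) μ(𝟙) = 1; and (4) μ(A) ≥ 0 whenever A is positive semidefinite. Then there exists a positive semidefinite matrix ρ with trace 1 such that μ(A) = tr(ρA) for every Hermitian A. -/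
open scoped ComplexOrder
open Matrix in

theorem stmt_2 (d : ℕ) (hd : 1 ≤ d) (μ : Matrix (Fin d) (Fin d) ℂ → ℝ)
    (h1 : ∀ (α : ℝ) (A : Matrix (Fin d) (Fin d) ℂ), A.IsHermitian →
      μ ((α : ℂ) • A) = α * μ A)
    (h2 : ∀ A B : Matrix (Fin d) (Fin d) ℂ, A.IsHermitian → B.IsHermitian →
      μ (A + B) = μ A + μ B)
    (h3 : μ 1 = 1)
    (h4 : ∀ A : Matrix (Fin d) (Fin d) ℂ, A.PosSemidef → 0 ≤ μ A) :
    ∃ ρ : Matrix (Fin d) (Fin d) ℂ, ρ.PosSemidef ∧ ρ.trace = 1 ∧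
      ∀ A : Matrix (Fin d) (Fin d) ℂ, A.IsHermitian → (ρ * A).trace = (μ A : ℂ) := by
  classical
  -- Hermitian and anti-Hermitian parts
  set H : Matrix (Fin d) (Fin d) ℂ → Matrix (Fin d) (Fin d) ℂ :=
    fun M => ((2 : ℂ)⁻¹) • (M + Mᴴ) with hHdef
  set K : Matrix (Fin d) (Fin d) ℂ → Matrix (Fin d) (Fin d) ℂ :=
    fun M => (-(Complex.I / 2)) • (M - Mᴴ) with hKdef
  have entry_simps := 0
  have hHherm : ∀ M, (H M).IsHermitian := by
    intro M
    ext i j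
    simp only [hHdef, Matrix.conjTranspose_apply, Matrix.smul_apply, Matrix.add_apply,
      smul_eq_mul, star_mul', star_add, star_star, star_inv₀, Complex.star_def,
      map_ofNat, map_inv₀, Complex.conj_conj]
    first | ring | (ring_nf; simp only [Complex.I_sq]; ring_nf)
  have hKherm : ∀ M, (K M).IsHermitian := by
    intro M
    ext i j
    simp only [hKdef, Matrix.conjTranspose_apply, Matrix.smul_apply, Matrix.sub_apply,
      smul_eq_mul, star_mul', star_sub, star_neg, star_star, Complex.star_def,
      map_div₀, map_ofNat, Complex.conj_I, Complex.conj_conj]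
    first | ring | (ring_nf; simp only [Complex.I_sq]; ring_nf)
  have hμ0 : μ 0 = 0 := by
    have := h1 0 0 Matrix.isHermitian_zero
    simpa using this
  have hμneg : ∀ M : Matrix (Fin d) (Fin d) ℂ, M.IsHermitian → μ (-M) = -(μ M) := by
    intro M hM
    have := h1 (-1) M hM
    simpa using this
  -- the complex extension
  set T : Matrix (Fin d) (Fin d) ℂ → ℂ :=
    fun M => (μ (H M) : ℂ) + Complex.I * (μ (K M) : ℂ) with hTdef
  have hHadd : ∀ M N, H (M + N) = H M + H N := by
    intro M N
    ext i j
    simp only [hHdef, Matrix.conjTranspose_apply, Matrix.smul_apply, Matrix.add_apply,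
      smul_eq_mul, star_add]
    ring
  have hKadd : ∀ M N, K (M + N) = K M + K N := by
    intro M N
    ext i j
    simp only [hKdef, Matrix.conjTranspose_apply, Matrix.smul_apply, Matrix.add_apply,
      Matrix.sub_apply, smul_eq_mul, star_add]
    ring
  have hTadd : ∀ M N, T (M + N) = T M + T N := by
    intro M N
    simp only [hTdef, hHadd, hKadd, h2 _ _ (hHherm M) (hHherm N),
      h2 _ _ (hKherm M) (hKherm N)]
    push_cast
    ring
  have hHrsmul : ∀ (r : ℝ) M, H ((r : ℂ) • M) = (r : ℂ) • H M := by
    intro r M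
    ext i j
    simp only [hHdef, Matrix.conjTranspose_apply, Matrix.smul_apply, Matrix.add_apply,
      smul_eq_mul, star_mul', Complex.star_def, Complex.conj_ofReal]
    ring
  have hKrsmul : ∀ (r : ℝ) M, K ((r : ℂ) • M) = (r : ℂ) • K M := by
    intro r M
    ext i j
    simp only [hKdef, Matrix.conjTranspose_apply, Matrix.smul_apply, Matrix.sub_apply,
      smul_eq_mul, star_mul', Complex.star_def, Complex.conj_ofReal]
    ring
  have hTrsmul : ∀ (r : ℝ) M, T ((r : ℂ) • M) = (r : ℂ) * T M := by
    intro r M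
    simp only [hTdef, hHrsmul, hKrsmul, h1 r _ (hHherm M), h1 r _ (hKherm M)]
    push_cast
    ring
  have hHi : ∀ M, H (Complex.I • M) = -(K M) := by
    intro M
    ext i j
    simp only [hHdef, hKdef, Matrix.conjTranspose_apply, Matrix.smul_apply,
      Matrix.add_apply, Matrix.sub_apply, Matrix.neg_apply, smul_eq_mul, star_mul',
      Complex.star_def, Complex.conj_I, Complex.conj_conj]
    first | ring | (ring_nf; simp only [Complex.I_sq]; ring_nf)
  have hKi : ∀ M, K (Complex.I • M) = H M := by
    intro M
    ext i j
    simp only [hHdef, hKdef, Matrix.conjTranspose_apply, Matrix.smul_apply,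
      Matrix.add_apply, Matrix.sub_apply, smul_eq_mul, star_mul',
      Complex.star_def, Complex.conj_I, Complex.conj_conj]
    linear_combination (-(M i j + (starRingEnd ℂ) (M j i))/2) * Complex.I_sq
  have hTi : ∀ M, T (Complex.I • M) = Complex.I * T M := by
    intro M
    simp only [hTdef, hHi, hKi]
    rw [show -(K M) = ((-1 : ℝ) : ℂ) • K M by push_cast; rw [neg_one_smul],
      h1 (-1) _ (hKherm M)]
    push_cast
    linear_combination -((μ (K M) : ℂ)) * Complex.I_sq
  have hTsmul : ∀ (c : ℂ) M, T (c • M) = c * T M := by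
    intro c M
    have hc : c • M = ((c.re : ℂ)) • M + Complex.I • (((c.im : ℂ)) • M) := by
      rw [smul_smul, ← add_smul]
      congr 1
      simp [Complex.ext_iff]
    rw [hc, hTadd, hTrsmul, hTi, hTrsmul]
    linear_combination (T M) * Complex.re_add_im c
  -- T is a linear map
  let Tl : Matrix (Fin d) (Fin d) ℂ →ₗ[ℂ] ℂ :=
    { toFun := T, map_add' := hTadd, map_smul' := hTsmul }
  -- T agrees with μ on Hermitian matrices
  have hTherm : ∀ M : Matrix (Fin d) (Fin d) ℂ, M.IsHermitian → T M = (μ M : ℂ) := by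
    intro M hM
    have hH : H M = M := by
      simp only [hHdef, hM.eq]
      rw [← two_smul ℂ M, smul_smul]
      norm_num
    have hK : K M = 0 := by simp [hKdef, hM.eq]
    simp [hTdef, hH, hK, hμ0]
  -- define ρ
  set ρ : Matrix (Fin d) (Fin d) ℂ :=
    Matrix.of (fun j k => T (Matrix.single k j 1)) with hρdef
  -- representation
  have hrep : ∀ M : Matrix (Fin d) (Fin d) ℂ, (ρ * M).trace = T M := by
    intro M
    have hM := Matrix.matrix_eq_sum_single M
    calc (ρ * M).trace = ∑ j, ∑ k, ρ j k * M k j := by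
          simp [Matrix.trace, Matrix.mul_apply, Matrix.diag]
      _ = ∑ k, ∑ j, M k j * T (Matrix.single k j 1) := by
          rw [Finset.sum_comm]
          exact Finset.sum_congr rfl fun k _ => Finset.sum_congr rfl fun j _ => by
            simp [hρdef, mul_comm]
      _ = T M := by
          conv_rhs => rw [hM]
          rw [show T (∑ k, ∑ j, Matrix.single k j (M k j))
              = Tl (∑ k, ∑ j, Matrix.single k j (M k j)) from rfl]
          rw [map_sum]
          refine Finset.sum_congr rfl fun k _ => ?_
          rw [map_sum]
          refine Finset.sum_congr rfl fun j _ => ?_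
          rw [show Matrix.single k j (M k j)
              = (M k j) • Matrix.single k j 1 by
            rw [Matrix.smul_single, smul_eq_mul, mul_one]]
          rw [_root_.map_smul]
          simp [Tl, smul_eq_mul]
  -- star property
  have hTstar : ∀ M : Matrix (Fin d) (Fin d) ℂ, T Mᴴ = starRingEnd ℂ (T M) := by
    intro M
    have hHc : H Mᴴ = H M := by
      simp only [hHdef, Matrix.conjTranspose_conjTranspose]; rw [add_comm]
    have hKc : K Mᴴ = -(K M) := by
      simp only [hKdef, Matrix.conjTranspose_conjTranspose]
      rw [← neg_sub M Mᴴ, smul_neg]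
    have hmu : μ (K Mᴴ) = -(μ (K M)) := by rw [hKc]; exact hμneg _ (hKherm M)
    simp only [hTdef]
    rw [hHc, hmu]
    simp [Complex.ext_iff]
  have hρherm : ρ.IsHermitian := by
    ext j k
    simp only [Matrix.conjTranspose_apply, hρdef, Matrix.of_apply]
    rw [← starRingEnd_apply, ← hTstar]
    congr 1
    ext a b
    simp only [Matrix.conjTranspose_apply, Matrix.single, Matrix.of_apply]
    simp [apply_ite (star : ℂ → ℂ), and_comm]
  refine ⟨ρ, Matrix.PosSemidef.of_dotProduct_mulVec_nonneg hρherm ?_, ?_, ?_⟩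
  · -- positive semidefinite
    intro x
    set M : Matrix (Fin d) (Fin d) ℂ := Matrix.vecMulVec x (star x) with hMdef
    have hMherm : M.IsHermitian := by
      ext a b
      simp only [hMdef, Matrix.conjTranspose_apply, Matrix.vecMulVec_apply, Pi.star_apply,
        star_mul', star_star]
      ring
    have hMpsd : M.PosSemidef := by
      refine Matrix.PosSemidef.of_dotProduct_mulVec_nonneg hMherm fun y => ?_
      have key : star y ⬝ᵥ M *ᵥ y = star (star x ⬝ᵥ y) * (star x ⬝ᵥ y) := by
        simp only [dotProduct, Matrix.mulVec, hMdef, Matrix.vecMulVec_apply,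
          Pi.star_apply, star_sum, star_mul', star_star, Finset.mul_sum, Finset.sum_mul]
        rw [Finset.sum_comm]
        refine Finset.sum_congr rfl fun a _ => Finset.sum_congr rfl fun b _ => ?_
        ring
      rw [key]
      exact star_mul_self_nonneg _
    have key : star x ⬝ᵥ ρ *ᵥ x = (ρ * M).trace := by
      simp only [Matrix.trace, Matrix.diag, Matrix.mul_apply, dotProduct,
        Matrix.mulVec, hMdef, Matrix.vecMulVec_apply, Pi.star_apply, Finset.mul_sum]
      refine Finset.sum_congr rfl fun a _ => Finset.sum_congr rfl fun b _ => ?_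
      ring
    rw [key, hrep, hTherm M hMherm]
    have := h4 M hMpsd
    exact_mod_cast Complex.real_le_real.mpr this
  · -- trace one
    have h := hrep 1
    rw [mul_one] at h
    rw [h, hTherm 1 Matrix.isHermitian_one, h3]
    norm_num
  · intro A hA
    rw [hrep, hTherm A hA]
end

section
/- (Busch's theorem, finite-dimensional form.) Let d ≥ 1 and let μ be a function from the set of effects on ℂ^d to the real interval [0,1] such that for every finite family of effects (E_i) with Σ_i E_i = 𝟙 one has Σ_i μ(E_i) = 1. Then there exists a positive semidefinite matrix ρ with trace 1 such that μ(E) = tr(ρE) for every effect E. -/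
open scoped ComplexOrder
open Matrix

/-- An effect on ℂ^d: a matrix `E` with both `E` and `1 - E` positive semidefinite. -/
def IsEffect {d : ℕ} (E : Matrix (Fin d) (Fin d) ℂ) : Prop :=
  E.PosSemidef ∧ (1 - E).PosSemidef

namespace Busch

variable {d : ℕ}

lemma isEffect_zero : IsEffect (0 : Matrix (Fin d) (Fin d) ℂ) :=
  ⟨Matrix.PosSemidef.zero, by simpa using Matrix.PosSemidef.one⟩

lemma isEffect_one : IsEffect (1 : Matrix (Fin d) (Fin d) ℂ) :=
  ⟨Matrix.PosSemidef.one, by simpa using Matrix.PosSemidef.zero⟩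

lemma effect_compl {E : Matrix (Fin d) (Fin d) ℂ} (h : IsEffect E) : IsEffect (1 - E) :=
  ⟨h.2, by simpa using h.1⟩

lemma posSemidef_smul {A : Matrix (Fin d) (Fin d) ℂ} (hA : A.PosSemidef) {c : ℝ}
    (hc : 0 ≤ c) : ((c : ℂ) • A).PosSemidef := by
  refine Matrix.PosSemidef.of_dotProduct_mulVec_nonneg ?_ ?_
  · unfold Matrix.IsHermitian
    rw [Matrix.conjTranspose_smul, hA.1]
    congr 1
    simp
  · intro x
    rw [Matrix.smul_mulVec, dotProduct_smul]
    have h1 : (0:ℂ) ≤ (c:ℂ) := by exact_mod_cast Complex.zero_le_real.mpr hc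
    exact mul_nonneg h1 (hA.dotProduct_mulVec_nonneg x)

lemma isEffect_smul {E : Matrix (Fin d) (Fin d) ℂ} (hE : IsEffect E) {c : ℝ}
    (h0 : 0 ≤ c) (h1 : c ≤ 1) : IsEffect ((c : ℂ) • E) := by
  refine ⟨posSemidef_smul hE.1 h0, ?_⟩
  have key : (1 : Matrix (Fin d) (Fin d) ℂ) - (c : ℂ) • E
      = (c : ℂ) • (1 - E) + ((1 - c : ℝ) : ℂ) • 1 := by
    push_cast
    rw [smul_sub, sub_smul]
    simp only [one_smul]
    abel
  rw [key]
  exact (posSemidef_smul hE.2 h0).add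
    (posSemidef_smul Matrix.PosSemidef.one (by linarith : (0:ℝ) ≤ 1 - c))

section Mu

variable (μ : Matrix (Fin d) (Fin d) ℂ → ℝ)
variable (hrange : ∀ E, IsEffect E → μ E ∈ Set.Icc (0 : ℝ) 1)
variable (hpovm : ∀ (n : ℕ) (E : Fin n → Matrix (Fin d) (Fin d) ℂ),
      (∀ i, IsEffect (E i)) → (∑ i, E i = 1) → ∑ i, μ (E i) = 1)

include hpovm

lemma mu_one : μ 1 = 1 := by
  have := hpovm 1 (fun _ => 1) (fun _ => isEffect_one) (by simp)
  simpa using this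

lemma mu_zero : μ 0 = 0 := by
  have := hpovm 2 ![1, 0] (by
    intro i; fin_cases i
    · exact isEffect_one
    · exact isEffect_zero) (by simp [Fin.sum_univ_two])
  have h1 := mu_one μ hpovm
  simp [Fin.sum_univ_two] at this
  linarith

lemma mu_compl {E : Matrix (Fin d) (Fin d) ℂ} (hE : IsEffect E) :
    μ E + μ (1 - E) = 1 := by
  have := hpovm 2 ![E, 1 - E] (by
    intro i; fin_cases i
    · exact hE
    · exact effect_compl hE) (by simp [Fin.sum_univ_two])
  simpa [Fin.sum_univ_two] using this

lemma mu_add {E F : Matrix (Fin d) (Fin d) ℂ} (hE : IsEffect E) (hF : IsEffect F)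
    (hEF : IsEffect (E + F)) : μ (E + F) = μ E + μ F := by
  have h3 := hpovm 3 ![E, F, 1 - (E + F)] (by
    intro i; fin_cases i
    · exact hE
    · exact hF
    · exact effect_compl hEF) (by simp [Fin.sum_univ_three])
  have h2 := mu_compl μ hpovm hEF
  simp [Fin.sum_univ_three] at h3
  linarith

include hrange

lemma mu_mono {E F : Matrix (Fin d) (Fin d) ℂ} (hE : IsEffect E) (hF : IsEffect F)
    (h : (F - E).PosSemidef) : μ E ≤ μ F := by
  have hFE : IsEffect (F - E) := ⟨h, by
    have he : (1 : Matrix (Fin d) (Fin d) ℂ) - (F - E) = (1 - F) + E := by abel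
    rw [he]; exact hF.2.add hE.1⟩
  have hsum : E + (F - E) = F := by abel
  have := mu_add μ hpovm hE hFE (by rw [hsum]; exact hF)
  rw [hsum] at this
  have h0 := (hrange _ hFE).1
  linarith

omit hrange in
lemma mu_nsmul {E : Matrix (Fin d) (Fin d) ℂ} (hE : IsEffect E) :
    ∀ n : ℕ, IsEffect ((n : ℂ) • E) → μ ((n : ℂ) • E) = n * μ E := by
  intro n
  induction n with
  | zero => intro _; simpa using mu_zero μ hpovm
  | succ n ih =>
    intro hsn
    have hdecomp : ((n + 1 : ℕ) : ℂ) • E = (n : ℂ) • E + E := by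
      push_cast; rw [add_smul, one_smul]
    have hn : IsEffect ((n : ℂ) • E) := by
      constructor
      · have : ((n : ℂ)) • E = (((n : ℝ)) : ℂ) • E := by norm_num
        rw [this]; exact posSemidef_smul hE.1 (by positivity)
      · have he : (1 : Matrix (Fin d) (Fin d) ℂ) - (n : ℂ) • E
            = (1 - ((n + 1 : ℕ) : ℂ) • E) + E := by
          rw [hdecomp]; abel
        rw [he]; exact hsn.2.add hE.1
    rw [hdecomp, mu_add μ hpovm hn hE (hdecomp ▸ hsn), ih hn]
    push_cast; ring

lemma mu_smul_frac {E : Matrix (Fin d) (Fin d) ℂ} (hE : IsEffect E) (m n : ℕ)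
    (hn : 0 < n) (hmn : m ≤ n) :
    μ ((((m : ℝ) / n : ℝ) : ℂ) • E) = ((m : ℝ) / n) * μ E := by
  set F : Matrix (Fin d) (Fin d) ℂ := (((n : ℝ)⁻¹ : ℝ) : ℂ) • E with hFdef
  have hninv0 : (0:ℝ) ≤ (n : ℝ)⁻¹ := by positivity
  have hninv1 : ((n : ℝ))⁻¹ ≤ 1 := by
    rw [inv_le_one_iff₀]; right; exact_mod_cast hn
  have hF : IsEffect F := isEffect_smul hE hninv0 hninv1
  have hnF : (n : ℂ) • F = E := by
    rw [hFdef, smul_smul]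
    have : (n : ℂ) * (((n : ℝ)⁻¹ : ℝ) : ℂ) = 1 := by
      push_cast
      field_simp
    rw [this, one_smul]
  have hmF : (m : ℂ) • F = (((m : ℝ) / n : ℝ) : ℂ) • E := by
    rw [hFdef, smul_smul]
    congr 1
    push_cast
    field_simp
  have h1 := mu_nsmul μ hpovm hF n (by rw [hnF]; exact hE)
  rw [hnF] at h1
  have hmnE : IsEffect ((((m : ℝ) / n : ℝ) : ℂ) • E) := by
    refine isEffect_smul hE (by positivity) ?_
    rw [div_le_one (by exact_mod_cast hn)]
    exact_mod_cast hmn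
  have h2 := mu_nsmul μ hpovm hF m (by rw [hmF]; exact hmnE)
  rw [hmF] at h2
  rw [h2, h1]
  have hn0 : (n:ℝ) ≠ 0 := by exact_mod_cast hn.ne'
  field_simp

lemma mu_smul {E : Matrix (Fin d) (Fin d) ℂ} (hE : IsEffect E) {c : ℝ}
    (h0 : 0 ≤ c) (h1 : c ≤ 1) : μ ((c : ℂ) • E) = c * μ E := by
  -- rational values
  have hrat : ∀ q : ℚ, 0 ≤ q → q ≤ 1 → μ (((q : ℝ) : ℂ) • E) = (q : ℝ) * μ E := by
    intro q hq0 hq1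
    have hden : (0:ℝ) < q.den := by exact_mod_cast q.pos
    have hcast : (q : ℝ) = (q.num.toNat : ℝ) / q.den := by
      rw [Rat.cast_def]
      congr 1
      exact_mod_cast (Int.toNat_of_nonneg (Rat.num_nonneg.mpr hq0)).symm
    have hle : q.num.toNat ≤ q.den := by
      have : ((q.num.toNat : ℝ)) / q.den ≤ 1 := by rw [← hcast]; exact_mod_cast hq1
      rw [div_le_one hden] at this
      exact_mod_cast this
    rw [hcast]
    exact mu_smul_frac μ hrange hpovm hE _ _ q.pos hle
  -- monotonicity in the scalar
  have hmonoc : ∀ a b : ℝ, 0 ≤ a → a ≤ b → b ≤ 1 →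
      μ ((a : ℂ) • E) ≤ μ ((b : ℂ) • E) := by
    intro a b ha hab hb1
    refine mu_mono μ hrange hpovm (isEffect_smul hE ha (hab.trans hb1))
      (isEffect_smul hE (ha.trans hab) hb1) ?_
    have he : (b : ℂ) • E - (a : ℂ) • E = ((b - a : ℝ) : ℂ) • E := by
      push_cast; rw [sub_smul]
    rw [he]; exact posSemidef_smul hE.1 (by linarith)
  have hEμ0 := (hrange E hE).1
  have hEμ1 := (hrange E hE).2
  -- upper bound
  have hub : ∀ ε : ℝ, 0 < ε → μ ((c : ℂ) • E) ≤ c * μ E + ε := by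
    intro ε hε
    rcases eq_or_lt_of_le h1 with rfl | hlt
    · simp only [Complex.ofReal_one, one_smul, one_mul]
      linarith
    · have hlt2 : c < min 1 (c + ε) := lt_min hlt (by linarith)
      obtain ⟨q, hq1, hq2⟩ := exists_rat_btwn hlt2
      have hq0 : (0:ℚ) ≤ q := by
        have : (0:ℝ) < q := lt_of_le_of_lt h0 hq1
        exact_mod_cast this.le
      have hqle1 : q ≤ 1 := by
        have : (q:ℝ) < 1 := lt_of_lt_of_le hq2 (min_le_left _ _)
        exact_mod_cast this.le
      have h := hmonoc c q h0 hq1.le (by exact_mod_cast hqle1)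
      rw [hrat q hq0 hqle1] at h
      have hqc : (q:ℝ) ≤ c + ε := le_of_lt (lt_of_lt_of_le hq2 (min_le_right _ _))
      nlinarith
  -- lower bound
  have hlb : ∀ ε : ℝ, 0 < ε → c * μ E ≤ μ ((c : ℂ) • E) + ε := by
    intro ε hε
    rcases eq_or_lt_of_le h0 with rfl | hlt
    · simp only [Complex.ofReal_zero, zero_smul, zero_mul]
      have := mu_zero μ hpovm
      linarith
    · have hlt2 : max 0 (c - ε) < c := max_lt hlt (by linarith)
      obtain ⟨q, hq1, hq2⟩ := exists_rat_btwn hlt2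
      have hq0 : (0:ℚ) ≤ q := by
        have : (0:ℝ) ≤ q := le_of_lt (lt_of_le_of_lt (le_max_left _ _) hq1)
        exact_mod_cast this
      have hqle1 : q ≤ 1 := by
        have : (q:ℝ) < 1 := lt_of_lt_of_le hq2 h1
        exact_mod_cast this.le
      have h := hmonoc q c (by exact_mod_cast hq0) hq2.le h1
      rw [hrat q hq0 hqle1] at h
      have hqc : c - ε ≤ (q:ℝ) := le_of_lt (lt_of_le_of_lt (le_max_right _ _) hq1)
      nlinarith
  have h1' : μ ((c : ℂ) • E) ≤ c * μ E := le_of_forall_pos_le_add hub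
  have h2' : c * μ E ≤ μ ((c : ℂ) • E) := le_of_forall_pos_le_add hlb
  linarith

end Mu

lemma dot_self_eq {x : Fin d → ℂ} :
    dotProduct (star x) x = ((∑ i, Complex.normSq (x i) : ℝ) : ℂ) := by
  simp only [dotProduct, Pi.star_apply, Complex.ofReal_sum]
  refine Finset.sum_congr rfl fun i _ => ?_
  rw [Complex.star_def, Complex.normSq_eq_conj_mul_self]

open scoped MatrixOrder in
lemma quad_le_trace_mul {A : Matrix (Fin d) (Fin d) ℂ} (hA : A.PosSemidef) (x : Fin d → ℂ) :
    (dotProduct (star x) (A *ᵥ x)).re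
      ≤ (A.trace).re * ∑ i, Complex.normSq (x i) := by
  classical
  have h0 : 0 ≤ A := Matrix.nonneg_iff_posSemidef.mpr hA
  set B := CFC.sqrt A with hBdef
  have hH : Bᴴ = B := (Matrix.nonneg_iff_posSemidef.mp (CFC.sqrt_nonneg A)).1
  have hBB : Bᴴ * B = A := by rw [hH]; exact CFC.sqrt_mul_sqrt_self A h0
  have hquad : dotProduct (star x) (A *ᵥ x)
      = dotProduct (star (B *ᵥ x)) (B *ᵥ x) := by
    rw [← hBB, ← Matrix.mulVec_mulVec, dotProduct_mulVec,
      Matrix.vecMul_conjTranspose, star_star]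
  have htr : (A.trace).re = ∑ i, ∑ j, Complex.normSq (B i j) := by
    rw [← hBB]
    simp only [Matrix.trace, Matrix.diag, Matrix.mul_apply, Matrix.conjTranspose_apply]
    rw [Complex.re_sum]
    rw [Finset.sum_comm]
    refine Finset.sum_congr rfl fun i _ => ?_
    rw [Complex.re_sum]
    refine Finset.sum_congr rfl fun j _ => ?_
    rw [Complex.star_def, ← Complex.normSq_eq_conj_mul_self, Complex.ofReal_re]
  have hquadre : (dotProduct (star x) (A *ᵥ x)).re
      = ∑ i, Complex.normSq ((B *ᵥ x) i) := by
    rw [hquad, dot_self_eq, Complex.ofReal_re]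
  rw [hquadre, htr]
  have hCS : ∀ i, Complex.normSq ((B *ᵥ x) i)
      ≤ (∑ j, Complex.normSq (B i j)) * ∑ j, Complex.normSq (x j) := by
    intro i
    have h1 : ‖(B *ᵥ x) i‖ ≤ ∑ j, ‖B i j‖ * ‖x j‖ := by
      calc ‖(B *ᵥ x) i‖ = ‖∑ j, B i j * x j‖ := rfl
        _ ≤ ∑ j, ‖B i j * x j‖ := norm_sum_le _ _
        _ = ∑ j, ‖B i j‖ * ‖x j‖ := by simp [norm_mul]
    have h2 : (∑ j, ‖B i j‖ * ‖x j‖) ^ 2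
        ≤ (∑ j, ‖B i j‖ ^ 2) * ∑ j, ‖x j‖ ^ 2 :=
      Finset.sum_mul_sq_le_sq_mul_sq _ _ _
    have h3 : Complex.normSq ((B *ᵥ x) i) = ‖(B *ᵥ x) i‖ ^ 2 := by
      simp [Complex.normSq_eq_norm_sq]
    have h4 : ‖(B *ᵥ x) i‖ ^ 2 ≤ (∑ j, ‖B i j‖ * ‖x j‖) ^ 2 := by
      have hnn : (0:ℝ) ≤ ‖(B *ᵥ x) i‖ := norm_nonneg _
      nlinarith
    have h5 : (∑ j, Complex.normSq (B i j)) = ∑ j, ‖B i j‖ ^ 2 := by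
      refine Finset.sum_congr rfl fun j _ => ?_
      simp [Complex.normSq_eq_norm_sq]
    have h6 : (∑ j, Complex.normSq (x j)) = ∑ j, ‖x j‖ ^ 2 := by
      refine Finset.sum_congr rfl fun j _ => ?_
      simp [Complex.normSq_eq_norm_sq]
    rw [h3, h5, h6]
    exact le_trans h4 h2
  calc ∑ i, Complex.normSq ((B *ᵥ x) i)
      ≤ ∑ i, (∑ j, Complex.normSq (B i j)) * ∑ j, Complex.normSq (x j) :=
        Finset.sum_le_sum fun i _ => hCS i
    _ = (∑ i, ∑ j, Complex.normSq (B i j)) * ∑ i, Complex.normSq (x i) := by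
        rw [← Finset.sum_mul]

lemma trace_re_nonneg {A : Matrix (Fin d) (Fin d) ℂ} (hA : A.PosSemidef) :
    0 ≤ (A.trace).re := by
  have h : ∀ i : Fin d, 0 ≤ (A i i).re := by
    intro i
    have h0 := hA.dotProduct_mulVec_nonneg (Pi.single i 1)
    have he : dotProduct (star (Pi.single i 1)) (A *ᵥ (Pi.single i 1 : Fin d → ℂ))
        = A i i := by
      simp [dotProduct, Matrix.mulVec, Pi.single_apply, Finset.mul_sum,
        apply_ite, mul_comm]
    rw [he] at h0
    exact (Complex.nonneg_iff.mp h0).1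
  rw [Matrix.trace, Complex.re_sum]
  exact Finset.sum_nonneg fun i _ => h i

lemma isEffect_inv_smul {A : Matrix (Fin d) (Fin d) ℂ} (hA : A.PosSemidef) {t : ℝ}
    (ht : 0 < t) (htr : (A.trace).re ≤ t) : IsEffect (((t⁻¹ : ℝ) : ℂ) • A) := by
  refine ⟨posSemidef_smul hA (by positivity), Matrix.PosSemidef.of_dotProduct_mulVec_nonneg ?_ ?_⟩
  · have h1 : (((t⁻¹ : ℝ) : ℂ) • A).IsHermitian := (posSemidef_smul hA (by positivity)).1
    exact Matrix.isHermitian_one.sub h1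
  · intro x
    have hexp : ((1 : Matrix (Fin d) (Fin d) ℂ) - ((t⁻¹ : ℝ) : ℂ) • A) *ᵥ x
        = x - ((t⁻¹ : ℝ) : ℂ) • (A *ᵥ x) := by
      rw [Matrix.sub_mulVec, Matrix.one_mulVec, Matrix.smul_mulVec]
    rw [hexp, dotProduct_sub, dotProduct_smul, dot_self_eq]
    set w := dotProduct (star x) (A *ᵥ x) with hw
    have hw0 := hA.dotProduct_mulVec_nonneg x
    have hwim : w.im = 0 := (Complex.nonneg_iff.mp hw0).2.symm
    have hwre : 0 ≤ w.re := (Complex.nonneg_iff.mp hw0).1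
    have hwle := quad_le_trace_mul hA x
    set S := ∑ i, Complex.normSq (x i) with hS
    have hS0 : 0 ≤ S := Finset.sum_nonneg fun i _ => Complex.normSq_nonneg _
    rw [Complex.nonneg_iff]
    constructor
    · simp only [Complex.sub_re, Complex.ofReal_re, smul_eq_mul, Complex.mul_re,
        Complex.ofReal_im, zero_mul, sub_zero]
      have htrS : (A.trace).re * S ≤ t * S := mul_le_mul_of_nonneg_right htr hS0
      have : t⁻¹ * w.re ≤ t⁻¹ * (t * S) := by
        apply mul_le_mul_of_nonneg_left _ (by positivity)
        exact le_trans hwle htrS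
      rw [← mul_assoc, inv_mul_cancel₀ ht.ne', one_mul] at this
      linarith
    · simp [smul_eq_mul, Complex.mul_im, hwim]

lemma trace_smul_re (c : ℝ) (A : Matrix (Fin d) (Fin d) ℂ) :
    ((((c : ℝ) : ℂ) • A).trace).re = c * (A.trace).re := by
  rw [Matrix.trace_smul]
  simp [Complex.smul_re]

lemma trace_add_re (A B : Matrix (Fin d) (Fin d) ℂ) :
    (((A + B)).trace).re = (A.trace).re + (B.trace).re := by
  rw [Matrix.trace_add]; simp

section F

variable (μ : Matrix (Fin d) (Fin d) ℂ → ℝ)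
variable (hrange : ∀ E, IsEffect E → μ E ∈ Set.Icc (0 : ℝ) 1)
variable (hpovm : ∀ (n : ℕ) (E : Fin n → Matrix (Fin d) (Fin d) ℂ),
      (∀ i, IsEffect (E i)) → (∑ i, E i = 1) → ∑ i, μ (E i) = 1)

/-- The extension of `μ` to positive semidefinite matrices. -/
noncomputable def fPSD (A : Matrix (Fin d) (Fin d) ℂ) : ℝ :=
  ((A.trace).re + 1) * μ (((((A.trace).re + 1)⁻¹ : ℝ) : ℂ) • A)

include hrange hpovm

lemma fscale {A : Matrix (Fin d) (Fin d) ℂ} (hA : A.PosSemidef) {a b : ℝ}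
    (ha : 0 < a) (hab : a ≤ b) (htr : (A.trace).re ≤ a) :
    a * μ (((a⁻¹ : ℝ) : ℂ) • A) = b * μ (((b⁻¹ : ℝ) : ℂ) • A) := by
  have hb : 0 < b := lt_of_lt_of_le ha hab
  have hEa : IsEffect (((a⁻¹ : ℝ) : ℂ) • A) := isEffect_inv_smul hA ha htr
  have hsm : ((b⁻¹ : ℝ) : ℂ) • A = (((a / b : ℝ)) : ℂ) • (((a⁻¹ : ℝ) : ℂ) • A) := by
    rw [smul_smul]
    congr 1
    push_cast
    field_simp
  have h01 : 0 ≤ a / b := by positivity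
  have h11 : a / b ≤ 1 := (div_le_one hb).mpr hab
  rw [hsm, mu_smul μ hrange hpovm hEa h01 h11]
  field_simp

lemma fPSD_eq {A : Matrix (Fin d) (Fin d) ℂ} (hA : A.PosSemidef) {t : ℝ}
    (ht : 0 < t) (htr : (A.trace).re ≤ t) :
    fPSD μ A = t * μ (((t⁻¹ : ℝ) : ℂ) • A) := by
  have htr0 := trace_re_nonneg hA
  set s : ℝ := (A.trace).re + 1 with hs
  have hs0 : 0 < s := by linarith
  have htrs : (A.trace).re ≤ s := by linarith
  have hfd : fPSD μ A = s * μ (((s⁻¹ : ℝ) : ℂ) • A) := rfl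
  rcases le_total s t with h | h
  · rw [hfd]; exact fscale μ hrange hpovm hA hs0 h htrs
  · rw [hfd]; exact (fscale μ hrange hpovm hA ht h htr).symm

lemma fPSD_nonneg {A : Matrix (Fin d) (Fin d) ℂ} (hA : A.PosSemidef) :
    0 ≤ fPSD μ A := by
  have htr0 := trace_re_nonneg hA
  have hE : IsEffect ((((((A.trace).re + 1)⁻¹ : ℝ)) : ℂ) • A) :=
    isEffect_inv_smul hA (by linarith) (by linarith)
  exact mul_nonneg (by linarith) (hrange _ hE).1

lemma fPSD_effect {A : Matrix (Fin d) (Fin d) ℂ} (hA : IsEffect A) :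
    fPSD μ A = μ A := by
  have htr0 := trace_re_nonneg hA.1
  set s : ℝ := (A.trace).re + 1 with hs
  have hs1 : 1 ≤ s := by linarith
  have hs0 : 0 < s := by linarith
  have h := mu_smul μ hrange hpovm hA (c := s⁻¹) (by positivity)
    (inv_le_one_of_one_le₀ hs1)
  have hfd : fPSD μ A = s * μ (((s⁻¹ : ℝ) : ℂ) • A) := rfl
  rw [hfd, h, ← mul_assoc, mul_inv_cancel₀ hs0.ne', one_mul]

lemma fPSD_add {A B : Matrix (Fin d) (Fin d) ℂ} (hA : A.PosSemidef)
    (hB : B.PosSemidef) : fPSD μ (A + B) = fPSD μ A + fPSD μ B := by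
  have htrA := trace_re_nonneg hA
  have htrB := trace_re_nonneg hB
  set t : ℝ := (A.trace).re + (B.trace).re + 1 with htdef
  have ht : 0 < t := by linarith
  have htrAB : ((A + B).trace).re ≤ t := by rw [trace_add_re]; linarith
  have h1 : fPSD μ (A + B) = t * μ (((t⁻¹ : ℝ) : ℂ) • (A + B)) :=
    fPSD_eq μ hrange hpovm (hA.add hB) ht htrAB
  have h2 : fPSD μ A = t * μ (((t⁻¹ : ℝ) : ℂ) • A) :=
    fPSD_eq μ hrange hpovm hA ht (by linarith)
  have h3 : fPSD μ B = t * μ (((t⁻¹ : ℝ) : ℂ) • B) :=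
    fPSD_eq μ hrange hpovm hB ht (by linarith)
  have hsplit : ((t⁻¹ : ℝ) : ℂ) • (A + B)
      = ((t⁻¹ : ℝ) : ℂ) • A + ((t⁻¹ : ℝ) : ℂ) • B := smul_add _ _ _
  have hEA : IsEffect (((t⁻¹ : ℝ) : ℂ) • A) := isEffect_inv_smul hA ht (by linarith)
  have hEB : IsEffect (((t⁻¹ : ℝ) : ℂ) • B) := isEffect_inv_smul hB ht (by linarith)
  have hEAB : IsEffect (((t⁻¹ : ℝ) : ℂ) • (A + B)) :=
    isEffect_inv_smul (hA.add hB) ht htrAB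
  rw [hsplit] at hEAB
  have hadd := mu_add μ hpovm hEA hEB hEAB
  rw [h1, h2, h3, hsplit, hadd]
  ring

lemma fPSD_smul {A : Matrix (Fin d) (Fin d) ℂ} (hA : A.PosSemidef) {c : ℝ}
    (hc : 0 ≤ c) : fPSD μ (((c : ℝ) : ℂ) • A) = c * fPSD μ A := by
  rcases eq_or_lt_of_le hc with rfl | hc0
  · have h0 : (((0 : ℝ) : ℂ)) • A = (0 : Matrix (Fin d) (Fin d) ℂ) := by simp
    rw [h0]
    have : fPSD μ (0 : Matrix (Fin d) (Fin d) ℂ) = 0 := by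
      have hfd : fPSD μ (0 : Matrix (Fin d) (Fin d) ℂ)
          = (((0:Matrix (Fin d) (Fin d) ℂ).trace).re + 1)
            * μ ((((((0:Matrix (Fin d) (Fin d) ℂ).trace).re + 1)⁻¹ : ℝ) : ℂ) • 0) := rfl
      rw [hfd]
      simp [mu_zero μ hpovm]
    rw [this]; ring
  · have htrA := trace_re_nonneg hA
    set s : ℝ := (A.trace).re + 1 with hsdef
    have hs : 0 < s := by linarith
    have hcs : 0 < c * s := by positivity
    have htrcA : ((((c : ℝ) : ℂ) • A).trace).re ≤ c * s := by
      rw [trace_smul_re]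
      have : c * (A.trace).re ≤ c * s := by
        apply mul_le_mul_of_nonneg_left _ hc
        linarith
      linarith
    have h1 : fPSD μ (((c : ℝ) : ℂ) • A)
        = (c * s) * μ ((((c * s)⁻¹ : ℝ) : ℂ) • (((c : ℝ) : ℂ) • A)) :=
      fPSD_eq μ hrange hpovm (posSemidef_smul hA hc) hcs htrcA
    have h2 : (((c * s)⁻¹ : ℝ) : ℂ) • (((c : ℝ) : ℂ) • A) = ((s⁻¹ : ℝ) : ℂ) • A := by
      rw [smul_smul]
      congr 1
      push_cast
      field_simp
    have h3 : fPSD μ A = s * μ (((s⁻¹ : ℝ) : ℂ) • A) := rfl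
    rw [h1, h2, h3]
    ring

lemma fPSD_one : fPSD μ (1 : Matrix (Fin d) (Fin d) ℂ) = 1 := by
  rw [fPSD_effect μ hrange hpovm isEffect_one, mu_one μ hpovm]

lemma fPSD_smul_one {t : ℝ} (ht : 0 ≤ t) :
    fPSD μ (((t : ℝ) : ℂ) • (1 : Matrix (Fin d) (Fin d) ℂ)) = t := by
  rw [fPSD_smul μ hrange hpovm Matrix.PosSemidef.one ht, fPSD_one μ hrange hpovm]
  ring

end F

/-- Entrywise ℓ¹ bound of a matrix. -/
noncomputable def bnd (A : Matrix (Fin d) (Fin d) ℂ) : ℝ := ∑ i, ∑ j, ‖A i j‖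

lemma bnd_nonneg (A : Matrix (Fin d) (Fin d) ℂ) : 0 ≤ bnd A :=
  Finset.sum_nonneg fun i _ => Finset.sum_nonneg fun j _ => norm_nonneg _

lemma bnd_add_le (A B : Matrix (Fin d) (Fin d) ℂ) : bnd (A + B) ≤ bnd A + bnd B := by
  unfold bnd
  rw [← Finset.sum_add_distrib]
  refine Finset.sum_le_sum fun i _ => ?_
  rw [← Finset.sum_add_distrib]
  exact Finset.sum_le_sum fun j _ => norm_add_le _ _

lemma bnd_smul (A : Matrix (Fin d) (Fin d) ℂ) {c : ℝ} (hc : 0 ≤ c) :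
    bnd (((c : ℝ) : ℂ) • A) = c * bnd A := by
  unfold bnd
  rw [Finset.mul_sum]
  refine Finset.sum_congr rfl fun i _ => ?_
  rw [Finset.mul_sum]
  refine Finset.sum_congr rfl fun j _ => ?_
  rw [Matrix.smul_apply, smul_eq_mul, norm_mul, Complex.norm_real, Real.norm_eq_abs,
    abs_of_nonneg hc]

lemma bnd_neg (A : Matrix (Fin d) (Fin d) ℂ) : bnd (-A) = bnd A := by
  unfold bnd
  refine Finset.sum_congr rfl fun i _ => Finset.sum_congr rfl fun j _ => ?_
  simp

lemma herm_real_smul {A : Matrix (Fin d) (Fin d) ℂ} (hA : A.IsHermitian) (c : ℝ) :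
    (((c : ℝ) : ℂ) • A).IsHermitian := by
  unfold Matrix.IsHermitian
  rw [Matrix.conjTranspose_smul, hA.eq]
  congr 1
  simp

lemma herm_sum {ι : Type*} (s : Finset ι) (f : ι → Matrix (Fin d) (Fin d) ℂ)
    (hf : ∀ i ∈ s, (f i).IsHermitian) : (∑ i ∈ s, f i).IsHermitian := by
  unfold Matrix.IsHermitian
  rw [Matrix.conjTranspose_sum]
  exact Finset.sum_congr rfl hf

lemma herm_quad_im {A : Matrix (Fin d) (Fin d) ℂ} (hA : A.IsHermitian) (x : Fin d → ℂ) :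
    (dotProduct (star x) (A *ᵥ x)).im = 0 := by
  have hst : star (dotProduct (star x) (A *ᵥ x))
      = dotProduct (star x) (A *ᵥ x) := by
    rw [← Matrix.star_dotProduct_star, star_star, Matrix.star_mulVec, hA.eq]
    rw [dotProduct_mulVec]
  have := congrArg Complex.im hst
  simp only [Complex.star_def, Complex.conj_im] at this
  linarith

lemma norm_quad_le (A : Matrix (Fin d) (Fin d) ℂ) (x : Fin d → ℂ) :
    ‖dotProduct (star x) (A *ᵥ x)‖ ≤ bnd A * ∑ i, Complex.normSq (x i) := by
  set S := ∑ i, Complex.normSq (x i) with hS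
  have hS0 : 0 ≤ S := Finset.sum_nonneg fun i _ => Complex.normSq_nonneg _
  have hxx : ∀ i j : Fin d, ‖x i‖ * ‖x j‖ ≤ S := by
    intro i j
    have hi : ‖x i‖ ^ 2 ≤ S := by
      rw [hS]
      have : ‖x i‖ ^ 2 = Complex.normSq (x i) := by
        simp [Complex.normSq_eq_norm_sq]
      rw [this]
      exact Finset.single_le_sum (fun k _ => Complex.normSq_nonneg (x k))
        (Finset.mem_univ i)
    have hj : ‖x j‖ ^ 2 ≤ S := by
      rw [hS]
      have : ‖x j‖ ^ 2 = Complex.normSq (x j) := by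
        simp [Complex.normSq_eq_norm_sq]
      rw [this]
      exact Finset.single_le_sum (fun k _ => Complex.normSq_nonneg (x k))
        (Finset.mem_univ j)
    nlinarith [norm_nonneg (x i), norm_nonneg (x j)]
  have hexp : dotProduct (star x) (A *ᵥ x) = ∑ i, star (x i) * ∑ j, A i j * x j := by
    simp [dotProduct, Matrix.mulVec]
  rw [hexp]
  calc ‖∑ i, star (x i) * ∑ j, A i j * x j‖
      ≤ ∑ i, ‖star (x i) * ∑ j, A i j * x j‖ := norm_sum_le _ _
    _ ≤ ∑ i, ∑ j, ‖A i j‖ * S := by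
        refine Finset.sum_le_sum fun i _ => ?_
        rw [norm_mul, norm_star]
        calc ‖x i‖ * ‖∑ j, A i j * x j‖
            ≤ ‖x i‖ * ∑ j, ‖A i j‖ * ‖x j‖ := by
              apply mul_le_mul_of_nonneg_left _ (norm_nonneg _)
              calc ‖∑ j, A i j * x j‖ ≤ ∑ j, ‖A i j * x j‖ := norm_sum_le _ _
                _ = ∑ j, ‖A i j‖ * ‖x j‖ := by simp [norm_mul]
          _ = ∑ j, ‖A i j‖ * (‖x i‖ * ‖x j‖) := by
              rw [Finset.mul_sum]
              refine Finset.sum_congr rfl fun j _ => by ring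
          _ ≤ ∑ j, ‖A i j‖ * S := by
              refine Finset.sum_le_sum fun j _ => ?_
              exact mul_le_mul_of_nonneg_left (hxx i j) (norm_nonneg _)
    _ = bnd A * S := by
        unfold bnd
        rw [Finset.sum_mul]
        refine Finset.sum_congr rfl fun i _ => ?_
        rw [Finset.sum_mul]

lemma herm_shift_psd {A : Matrix (Fin d) (Fin d) ℂ} (hA : A.IsHermitian) :
    (A + ((bnd A : ℝ) : ℂ) • 1).PosSemidef := by
  refine Matrix.PosSemidef.of_dotProduct_mulVec_nonneg ?_ ?_
  · exact hA.add (posSemidef_smul Matrix.PosSemidef.one (bnd_nonneg A)).1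
  · intro x
    have hexp : (A + ((bnd A : ℝ) : ℂ) • 1) *ᵥ x = A *ᵥ x + ((bnd A : ℝ) : ℂ) • x := by
      rw [Matrix.add_mulVec, Matrix.smul_mulVec, Matrix.one_mulVec]
    rw [hexp, dotProduct_add, dotProduct_smul, dot_self_eq]
    set w := dotProduct (star x) (A *ᵥ x) with hw
    set S := ∑ i, Complex.normSq (x i) with hS
    have him : w.im = 0 := herm_quad_im hA x
    have hnorm := norm_quad_le A x
    have hre : |w.re| ≤ ‖w‖ := Complex.abs_re_le_norm w
    rw [Complex.nonneg_iff]
    constructor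
    · simp only [Complex.add_re, smul_eq_mul, Complex.mul_re, Complex.ofReal_re,
        Complex.ofReal_im, zero_mul, sub_zero]
      have h1 : -w.re ≤ bnd A * S := by
        have := abs_le.mp hre
        linarith [le_trans hre hnorm]
      have := abs_le.mp (le_trans hre hnorm : |w.re| ≤ bnd A * S)
      linarith
    · simp [smul_eq_mul, Complex.mul_im, him]

section G

variable (μ : Matrix (Fin d) (Fin d) ℂ → ℝ)
variable (hrange : ∀ E, IsEffect E → μ E ∈ Set.Icc (0 : ℝ) 1)
variable (hpovm : ∀ (n : ℕ) (E : Fin n → Matrix (Fin d) (Fin d) ℂ),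
      (∀ i, IsEffect (E i)) → (∑ i, E i = 1) → ∑ i, μ (E i) = 1)

/-- The extension of `μ` to Hermitian matrices. -/
noncomputable def gH (A : Matrix (Fin d) (Fin d) ℂ) : ℝ :=
  fPSD μ (A + ((bnd A : ℝ) : ℂ) • 1) - bnd A

include hrange hpovm

lemma fPSD_zero : fPSD μ (0 : Matrix (Fin d) (Fin d) ℂ) = 0 := by
  have h := fPSD_smul μ hrange hpovm (Matrix.PosSemidef.one
    (n := Fin d) (R := ℂ)) (le_refl (0:ℝ))
  simpa using h

lemma gH_eq {A : Matrix (Fin d) (Fin d) ℂ} (hA : A.IsHermitian) {c : ℝ}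
    (hc : bnd A ≤ c) : gH μ A = fPSD μ (A + ((c : ℝ) : ℂ) • 1) - c := by
  have hb := bnd_nonneg A
  have hdec : A + ((c : ℝ) : ℂ) • (1 : Matrix (Fin d) (Fin d) ℂ)
      = (A + ((bnd A : ℝ) : ℂ) • 1) + (((c - bnd A : ℝ)) : ℂ) • 1 := by
    rw [add_assoc, ← add_smul]
    congr 2
    push_cast
    ring
  rw [hdec, fPSD_add μ hrange hpovm (herm_shift_psd hA)
    (posSemidef_smul Matrix.PosSemidef.one (by linarith)),
    fPSD_smul_one μ hrange hpovm (by linarith : (0:ℝ) ≤ c - bnd A)]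
  unfold gH
  ring

lemma gH_psd {A : Matrix (Fin d) (Fin d) ℂ} (hA : A.PosSemidef) :
    gH μ A = fPSD μ A := by
  unfold gH
  rw [fPSD_add μ hrange hpovm hA (posSemidef_smul Matrix.PosSemidef.one (bnd_nonneg A)),
    fPSD_smul_one μ hrange hpovm (bnd_nonneg A)]
  ring

lemma gH_add {A B : Matrix (Fin d) (Fin d) ℂ} (hA : A.IsHermitian)
    (hB : B.IsHermitian) : gH μ (A + B) = gH μ A + gH μ B := by
  have hbA := bnd_nonneg A
  have hbB := bnd_nonneg B
  have h1 : gH μ (A + B) = fPSD μ ((A + B) + ((bnd A + bnd B : ℝ) : ℂ) • 1)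
      - (bnd A + bnd B) :=
    gH_eq μ hrange hpovm (hA.add hB) (bnd_add_le A B)
  have hdec : (A + B) + ((bnd A + bnd B : ℝ) : ℂ) • (1 : Matrix (Fin d) (Fin d) ℂ)
      = (A + ((bnd A : ℝ) : ℂ) • 1) + (B + ((bnd B : ℝ) : ℂ) • 1) := by
    have : ((bnd A + bnd B : ℝ) : ℂ) = ((bnd A : ℝ) : ℂ) + ((bnd B : ℝ) : ℂ) := by
      push_cast; ring
    rw [this, add_smul]
    abel
  rw [h1, hdec, fPSD_add μ hrange hpovm (herm_shift_psd hA) (herm_shift_psd hB)]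
  unfold gH
  ring

lemma gH_smul_nonneg {A : Matrix (Fin d) (Fin d) ℂ} (hA : A.IsHermitian) {c : ℝ}
    (hc : 0 ≤ c) : gH μ (((c : ℝ) : ℂ) • A) = c * gH μ A := by
  have h1 : gH μ (((c : ℝ) : ℂ) • A)
      = fPSD μ (((c : ℝ) : ℂ) • A + ((c * bnd A : ℝ) : ℂ) • 1) - c * bnd A := by
    unfold gH
    rw [bnd_smul A hc]
  have hdec : ((c : ℝ) : ℂ) • A + ((c * bnd A : ℝ) : ℂ) • (1 : Matrix (Fin d) (Fin d) ℂ)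
      = ((c : ℝ) : ℂ) • (A + ((bnd A : ℝ) : ℂ) • 1) := by
    rw [smul_add, smul_smul]
    congr 2
    push_cast; ring
  rw [h1, hdec, fPSD_smul μ hrange hpovm (herm_shift_psd hA) hc]
  unfold gH
  ring

lemma gH_zero : gH μ (0 : Matrix (Fin d) (Fin d) ℂ) = 0 := by
  unfold gH
  have hb : bnd (0 : Matrix (Fin d) (Fin d) ℂ) = 0 := by
    unfold bnd; simp
  rw [hb]
  simpa using fPSD_zero μ hrange hpovm

lemma gH_neg {A : Matrix (Fin d) (Fin d) ℂ} (hA : A.IsHermitian) :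
    gH μ (-A) = - gH μ A := by
  have hnegherm : (-A).IsHermitian := by
    unfold Matrix.IsHermitian
    rw [Matrix.conjTranspose_neg, hA.eq]
  have h := gH_add μ hrange hpovm hA hnegherm
  rw [add_neg_cancel, gH_zero μ hrange hpovm] at h
  linarith

lemma gH_smul {A : Matrix (Fin d) (Fin d) ℂ} (hA : A.IsHermitian) (c : ℝ) :
    gH μ (((c : ℝ) : ℂ) • A) = c * gH μ A := by
  rcases le_total 0 c with h | h
  · exact gH_smul_nonneg μ hrange hpovm hA h
  · have hd : ((c : ℝ) : ℂ) • A = -((((-c : ℝ)) : ℂ) • A) := by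
      rw [← neg_smul]
      congr 1
      push_cast
      ring
    rw [hd, gH_neg μ hrange hpovm (herm_real_smul hA (-c)),
      gH_smul_nonneg μ hrange hpovm hA (by linarith : (0:ℝ) ≤ -c)]
    ring

lemma gH_sum {ι : Type*} (s : Finset ι) (f : ι → Matrix (Fin d) (Fin d) ℂ)
    (hf : ∀ i ∈ s, (f i).IsHermitian) :
    gH μ (∑ i ∈ s, f i) = ∑ i ∈ s, gH μ (f i) := by
  classical
  induction s using Finset.induction_on with
  | empty => simpa using gH_zero μ hrange hpovm
  | insert a t hnotmem ih =>
    rw [Finset.sum_insert hnotmem, Finset.sum_insert hnotmem,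
      gH_add μ hrange hpovm (hf a (Finset.mem_insert_self a t))
        (herm_sum t f fun i hi => hf i (Finset.mem_insert_of_mem hi)),
      ih fun i hi => hf i (Finset.mem_insert_of_mem hi)]

end G

noncomputable def Sb (j k : Fin d) : Matrix (Fin d) (Fin d) ℂ :=
  Matrix.single j k 1 + Matrix.single k j 1

noncomputable def Tb (j k : Fin d) : Matrix (Fin d) (Fin d) ℂ :=
  Complex.I • Matrix.single j k 1 - Complex.I • Matrix.single k j 1

lemma Sb_apply (j k a b : Fin d) : Sb j k a b
    = (if j = a ∧ k = b then (1:ℂ) else 0) + (if k = a ∧ j = b then 1 else 0) := rfl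

lemma Tb_apply (j k a b : Fin d) : Tb j k a b
    = Complex.I * (if j = a ∧ k = b then (1:ℂ) else 0)
      - Complex.I * (if k = a ∧ j = b then 1 else 0) := by
  simp only [Tb, Matrix.sub_apply, Matrix.smul_apply, Matrix.single,
    Matrix.of_apply, smul_eq_mul]

lemma Sb_herm (j k : Fin d) : (Sb j k).IsHermitian := by
  apply Matrix.IsHermitian.ext
  intro a b
  rw [Sb_apply, Sb_apply]
  split_ifs <;> first | tauto | simp

lemma Tb_herm (j k : Fin d) : (Tb j k).IsHermitian := by
  apply Matrix.IsHermitian.ext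
  intro a b
  rw [Tb_apply, Tb_apply]
  split_ifs <;> first | tauto | simp

lemma Sb_symm (j k : Fin d) : Sb k j = Sb j k := by
  unfold Sb; abel

lemma Tb_antisymm (j k : Fin d) : Tb k j = - Tb j k := by
  unfold Tb; abel

lemma trace_mul_std (M : Matrix (Fin d) (Fin d) ℂ) (j k : Fin d) :
    (M * Matrix.single j k (1 : ℂ)).trace = M k j := by
  simp only [Matrix.trace, Matrix.diag, Matrix.mul_apply, Matrix.single,
    Matrix.of_apply, mul_ite, mul_one, mul_zero, ite_and]
  rw [Finset.sum_comm]
  simp [Finset.sum_ite_eq, Finset.sum_ite_eq']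

lemma herm_decomp {A : Matrix (Fin d) (Fin d) ℂ} (hA : A.IsHermitian) :
    A = ∑ p : Fin d × Fin d,
      ((((A p.1 p.2).re / 2 : ℝ) : ℂ) • Sb p.1 p.2
        + (((A p.1 p.2).im / 2 : ℝ) : ℂ) • Tb p.1 p.2) := by
  ext i k
  rw [Matrix.sum_apply]
  have hterm : ∀ p : Fin d × Fin d,
      ((((A p.1 p.2).re / 2 : ℝ) : ℂ) • Sb p.1 p.2
        + (((A p.1 p.2).im / 2 : ℝ) : ℂ) • Tb p.1 p.2) i k
      = (if p = (i, k) then A i k / 2 else 0)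
        + (if p = (k, i) then (starRingEnd ℂ) (A k i) / 2 else 0) := by
    rintro ⟨a, b⟩
    simp only [Matrix.add_apply, Matrix.smul_apply, Sb_apply, Tb_apply, smul_eq_mul,
      Prod.mk.injEq]
    by_cases h1 : a = i ∧ b = k
    · obtain ⟨rfl, rfl⟩ := h1
      by_cases hab : a = b
      · subst hab
        simp only [and_self, if_pos rfl, if_true]
        apply Complex.ext <;> simp <;> ring
      · simp only [hab, Ne.symm hab, and_true, true_and, and_self, if_true, if_false,
          false_and, and_false, if_neg, eq_self_iff_true, not_false_iff, if_pos]
        simp [hab, Ne.symm hab]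
        apply Complex.ext <;> simp <;> ring
    · by_cases h2 : b = i ∧ a = k
      · obtain ⟨rfl, rfl⟩ := h2
        have hab : a ≠ b := fun h => h1 ⟨h, h.symm⟩
        simp [hab, Ne.symm hab]
        apply Complex.ext <;> simp <;> ring
      · have p2 : ¬(a = k ∧ b = i) := fun h => h2 ⟨h.2, h.1⟩
        simp [h1, h2, p2]
  rw [Finset.sum_congr rfl fun p _ => hterm p, Finset.sum_add_distrib,
    Finset.sum_ite_eq' Finset.univ ((i,k) : Fin d × Fin d) (fun _ => A i k / 2),
    Finset.sum_ite_eq' Finset.univ ((k,i) : Fin d × Fin d) (fun _ => (starRingEnd ℂ) (A k i) / 2)]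
  simp only [Finset.mem_univ, if_true]
  rw [show (starRingEnd ℂ) (A k i) = A i k from hA.apply i k]
  ring

section Final

variable (μ : Matrix (Fin d) (Fin d) ℂ → ℝ)
variable (hrange : ∀ E, IsEffect E → μ E ∈ Set.Icc (0 : ℝ) 1)
variable (hpovm : ∀ (n : ℕ) (E : Fin n → Matrix (Fin d) (Fin d) ℂ),
      (∀ i, IsEffect (E i)) → (∑ i, E i = 1) → ∑ i, μ (E i) = 1)

/-- The candidate density matrix. -/
noncomputable def rho : Matrix (Fin d) (Fin d) ℂ :=
  Matrix.of fun j k =>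
    (((gH μ (Sb j k) : ℝ) : ℂ) + Complex.I * ((gH μ (Tb j k) : ℝ) : ℂ)) / 2

include hrange hpovm

lemma trace_rho_S (j k : Fin d) :
    ((rho μ) * Sb j k).trace = ((gH μ (Sb j k) : ℝ) : ℂ) := by
  have hS : gH μ (Sb k j) = gH μ (Sb j k) := by rw [Sb_symm]
  have hT : gH μ (Tb k j) = - gH μ (Tb j k) := by
    rw [Tb_antisymm]; exact gH_neg μ hrange hpovm (Tb_herm j k)
  show ((rho μ) * (Matrix.single j k 1 + Matrix.single k j 1)).trace = _
  rw [mul_add, Matrix.trace_add, trace_mul_std, trace_mul_std]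
  show ((((gH μ (Sb k j) : ℝ) : ℂ) + Complex.I * ((gH μ (Tb k j) : ℝ) : ℂ)) / 2)
      + ((((gH μ (Sb j k) : ℝ) : ℂ) + Complex.I * ((gH μ (Tb j k) : ℝ) : ℂ)) / 2) = _
  rw [hS, hT]
  push_cast
  ring

lemma trace_rho_T (j k : Fin d) :
    ((rho μ) * Tb j k).trace = ((gH μ (Tb j k) : ℝ) : ℂ) := by
  have hS : gH μ (Sb k j) = gH μ (Sb j k) := by rw [Sb_symm]
  have hT : gH μ (Tb k j) = - gH μ (Tb j k) := by
    rw [Tb_antisymm]; exact gH_neg μ hrange hpovm (Tb_herm j k)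
  show ((rho μ) * (Complex.I • Matrix.single j k 1
      - Complex.I • Matrix.single k j 1)).trace = _
  rw [mul_sub, Matrix.mul_smul, Matrix.mul_smul, Matrix.trace_sub, Matrix.trace_smul,
    Matrix.trace_smul, trace_mul_std, trace_mul_std]
  show Complex.I • ((((gH μ (Sb k j) : ℝ) : ℂ) + Complex.I * ((gH μ (Tb k j) : ℝ) : ℂ)) / 2)
      - Complex.I • ((((gH μ (Sb j k) : ℝ) : ℂ) + Complex.I * ((gH μ (Tb j k) : ℝ) : ℂ)) / 2) = _
  rw [hS, hT]
  simp only [smul_eq_mul]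
  push_cast
  ring_nf
  rw [Complex.I_sq]
  ring

lemma trace_rho_herm {A : Matrix (Fin d) (Fin d) ℂ} (hA : A.IsHermitian) :
    ((rho μ) * A).trace = ((gH μ A : ℝ) : ℂ) := by
  have hdec := herm_decomp hA
  have hherm : ∀ p : Fin d × Fin d, ((((A p.1 p.2).re / 2 : ℝ) : ℂ) • Sb p.1 p.2
      + (((A p.1 p.2).im / 2 : ℝ) : ℂ) • Tb p.1 p.2).IsHermitian :=
    fun p => (herm_real_smul (Sb_herm _ _) _).add (herm_real_smul (Tb_herm _ _) _)
  have hg : gH μ A = ∑ p : Fin d × Fin d, ((A p.1 p.2).re / 2 * gH μ (Sb p.1 p.2)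
      + (A p.1 p.2).im / 2 * gH μ (Tb p.1 p.2)) := by
    conv_lhs => rw [hdec]
    rw [gH_sum μ hrange hpovm _ _ (fun p _ => hherm p)]
    refine Finset.sum_congr rfl fun p _ => ?_
    rw [gH_add μ hrange hpovm (herm_real_smul (Sb_herm _ _) _)
        (herm_real_smul (Tb_herm _ _) _),
      gH_smul μ hrange hpovm (Sb_herm _ _), gH_smul μ hrange hpovm (Tb_herm _ _)]
  have htr : ((rho μ) * A).trace = ∑ p : Fin d × Fin d,
      ((((A p.1 p.2).re / 2 : ℝ) : ℂ) * ((gH μ (Sb p.1 p.2) : ℝ) : ℂ)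
        + (((A p.1 p.2).im / 2 : ℝ) : ℂ) * ((gH μ (Tb p.1 p.2) : ℝ) : ℂ)) := by
    conv_lhs => rw [hdec]
    rw [Matrix.mul_sum, Matrix.trace_sum]
    refine Finset.sum_congr rfl fun p _ => ?_
    rw [mul_add, Matrix.trace_add, Matrix.mul_smul, Matrix.trace_smul, Matrix.mul_smul,
      Matrix.trace_smul, trace_rho_S μ hrange hpovm p.1 p.2,
      trace_rho_T μ hrange hpovm p.1 p.2]
    simp only [smul_eq_mul]
  rw [htr, hg, Complex.ofReal_sum]
  refine Finset.sum_congr rfl fun p _ => ?_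
  push_cast
  ring

lemma rho_herm : (rho μ).IsHermitian := by
  apply Matrix.IsHermitian.ext
  intro a b
  have hS : gH μ (Sb b a) = gH μ (Sb a b) := by rw [Sb_symm]
  have hT : gH μ (Tb b a) = - gH μ (Tb a b) := by
    rw [Tb_antisymm]; exact gH_neg μ hrange hpovm (Tb_herm a b)
  show star ((((gH μ (Sb b a) : ℝ) : ℂ) + Complex.I * ((gH μ (Tb b a) : ℝ) : ℂ)) / 2) = _
  rw [hS, hT]
  show _ = (((gH μ (Sb a b) : ℝ) : ℂ) + Complex.I * ((gH μ (Tb a b) : ℝ) : ℂ)) / 2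
  simp [Complex.ext_iff]

end Final

end Busch

theorem stmt_3 (d : ℕ) (hd : 1 ≤ d) (μ : Matrix (Fin d) (Fin d) ℂ → ℝ)
    (hrange : ∀ E, IsEffect E → μ E ∈ Set.Icc (0 : ℝ) 1)
    (hpovm : ∀ (n : ℕ) (E : Fin n → Matrix (Fin d) (Fin d) ℂ),
      (∀ i, IsEffect (E i)) → (∑ i, E i = 1) → ∑ i, μ (E i) = 1) :
    ∃ ρ : Matrix (Fin d) (Fin d) ℂ, ρ.PosSemidef ∧ ρ.trace = 1 ∧
      ∀ E, IsEffect E → (ρ * E).trace = (μ E : ℂ) := by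
  classical
  refine ⟨Busch.rho μ, Matrix.PosSemidef.of_dotProduct_mulVec_nonneg (Busch.rho_herm μ hrange hpovm) ?_, ?_, ?_⟩
  · intro x
    set X := Matrix.vecMulVec x (star x) with hX
    have hXherm : X.IsHermitian := by
      apply Matrix.IsHermitian.ext
      intro a b
      simp [hX, Matrix.vecMulVec_apply, mul_comm]
    have hXpsd : X.PosSemidef := by
      refine Matrix.PosSemidef.of_dotProduct_mulVec_nonneg hXherm fun y => ?_
      have hXy : X *ᵥ y = (dotProduct (star x) y) • x := by
        ext a
        simp only [hX, Matrix.mulVec, dotProduct, Matrix.vecMulVec_apply,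
          Pi.smul_apply, smul_eq_mul, Pi.star_apply]
        rw [Finset.sum_mul]
        refine Finset.sum_congr rfl fun b _ => by ring
      rw [hXy, dotProduct_smul, smul_eq_mul, Matrix.star_dotProduct]
      exact star_mul_self_nonneg (dotProduct (star y) x)
    have hdot : dotProduct (star x) ((Busch.rho μ) *ᵥ x) = ((Busch.rho μ) * X).trace := by
      simp only [Matrix.trace, Matrix.diag, Matrix.mul_apply, Matrix.mulVec,
        dotProduct, hX, Matrix.vecMulVec_apply, Pi.star_apply, Finset.mul_sum]
      refine Finset.sum_congr rfl fun a _ => Finset.sum_congr rfl fun b _ => by ring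
    rw [hdot, Busch.trace_rho_herm μ hrange hpovm hXherm, Busch.gH_psd μ hrange hpovm hXpsd]
    exact Complex.zero_le_real.mpr (Busch.fPSD_nonneg μ hrange hpovm hXpsd)
  · have h1 : (Busch.rho μ).trace = ((Busch.rho μ) * 1).trace := by rw [mul_one]
    rw [h1, Busch.trace_rho_herm μ hrange hpovm Matrix.isHermitian_one,
      Busch.gH_psd μ hrange hpovm Matrix.PosSemidef.one, Busch.fPSD_one μ hrange hpovm]
    norm_num
  · intro E hE
    rw [Busch.trace_rho_herm μ hrange hpovm hE.1.1, Busch.gH_psd μ hrange hpovm hE.1,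
      Busch.fPSD_effect μ hrange hpovm hE]
end

section
/- (Core of the Caves–Fuchs–Schack theorem.) Let d ≥ 2, let I be a finite nonempty index set, let (ψ_i)_{i∈I} be rank-one orthogonal projections on ℂ^d, and let p : I → ℝ satisfy p_i ≥ 0, Σ_i p_i = 1, and Σ_i p_i ψ_i = (1/d)·𝟙 (i.e., the convex hull of the states contains the maximally mixed state). Define E_i := (d/(d−1))·p_i·(𝟙 − ψ_i). Then each E_i is an effect, Σ_{i∈I} E_i = 𝟙 (so the family (E_i) is a POVM), and tr(ψ_i E_i) = 0 for every i ∈ I. -/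
open scoped ComplexOrder

open Matrix in

private lemma smul_psd {n : Type*} [Fintype n] {M : Matrix n n ℂ} (hM : M.PosSemidef)
    {c : ℝ} (hc : 0 ≤ c) : ((c : ℂ) • M).PosSemidef := by
  refine .of_dotProduct_mulVec_nonneg ?_ (fun x => ?_)
  · unfold Matrix.IsHermitian
    rw [conjTranspose_smul, hM.1, Complex.star_def, Complex.conj_ofReal]
  · rw [smul_mulVec, dotProduct_smul]
    exact smul_nonneg (by exact_mod_cast hc) (hM.dotProduct_mulVec_nonneg x)

open Matrix in
private lemma proj_psd {n : Type*} [Fintype n] [DecidableEq n] {M : Matrix n n ℂ}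
    (h1 : M.IsHermitian) (h2 : M * M = M) : M.PosSemidef := by
  have : Mᴴ * M = M := by rw [h1]; exact h2
  simpa [this] using posSemidef_conjTranspose_mul_self M

open Matrix in
private lemma exists_fixed_vec {n : Type*} [Fintype n] [DecidableEq n] {M : Matrix n n ℂ}
    (h2 : M * M = M) (hM : M ≠ 0) : ∃ v : n → ℂ, v ≠ 0 ∧ M *ᵥ v = v := by
  have : ∃ x, M *ᵥ x ≠ 0 := by
    by_contra h
    push_neg at h
    apply hM
    ext i j
    have := congrFun (h (Pi.single j 1)) i
    simpa [mulVec_single] using this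
  obtain ⟨x, hx⟩ := this
  exact ⟨M *ᵥ x, hx, by rw [mulVec_mulVec, h2]⟩

open Matrix in
private lemma bound_lemma {n : Type*} [Fintype n] [DecidableEq n] {M : Matrix n n ℂ}
    (h2 : M * M = M) (hM : M ≠ 0) {a b : ℝ}
    (hS : ((a : ℂ) • 1 - (b : ℂ) • M).PosSemidef) : b ≤ a := by
  obtain ⟨v, hv, hfix⟩ := exists_fixed_vec h2 hM
  have hdot := hS.dotProduct_mulVec_nonneg v
  rw [sub_mulVec, smul_mulVec, smul_mulVec, one_mulVec, hfix,
    dotProduct_sub, dotProduct_smul, dotProduct_smul] at hdot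
  set t : ℂ := star v ⬝ᵥ v with ht
  have htr : t = ((∑ j, Complex.normSq (v j) : ℝ) : ℂ) := by
    simp [ht, dotProduct, Complex.mul_conj']
    push_cast
    congr 1
    ext j
    rw [mul_comm, Complex.mul_conj]
  have htpos : (0:ℝ) < ∑ j, Complex.normSq (v j) := by
    have : ∃ j, v j ≠ 0 := by
      by_contra h; push_neg at h; exact hv (funext h)
    obtain ⟨j, hj⟩ := this
    exact Finset.sum_pos' (fun _ _ => Complex.normSq_nonneg _)
      ⟨j, Finset.mem_univ j, Complex.normSq_pos.2 hj⟩
  have : (0:ℂ) ≤ (((a - b) * ∑ j, Complex.normSq (v j) : ℝ) : ℂ) := by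
    push_cast
    rw [sub_mul]
    rw [smul_eq_mul, smul_eq_mul, htr] at hdot
    push_cast at hdot
    convert hdot using 2
  rw [Complex.zero_le_real] at this
  nlinarith


theorem stmt_6 (d : ℕ) (hd : 2 ≤ d) {I : Type*} [Fintype I] [Nonempty I]
    (ψ : I → Matrix (Fin d) (Fin d) ℂ)
    (hψ : ∀ i, (ψ i).IsHermitian ∧ ψ i * ψ i = ψ i ∧ (ψ i).rank = 1)
    (p : I → ℝ) (hp0 : ∀ i, 0 ≤ p i) (hp1 : ∑ i, p i = 1)
    (hmix : ∑ i, (p i : ℂ) • ψ i = ((d : ℂ))⁻¹ • 1)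
    (E : I → Matrix (Fin d) (Fin d) ℂ)
    (hE : ∀ i, E i = (((d : ℂ) / ((d : ℂ) - 1)) * (p i : ℂ)) • (1 - ψ i)) :
    (∀ i, (E i).PosSemidef ∧ (1 - E i).PosSemidef) ∧
    (∑ i, E i = 1) ∧
    (∀ i, (ψ i * E i).trace = 0) := by
  classical
  have hdR : (2:ℝ) ≤ (d:ℝ) := by exact_mod_cast hd
  have hd0 : (d:ℝ) ≠ 0 := by linarith
  have hd1 : (d:ℝ) - 1 ≠ 0 := by linarith
  have hdC0 : (d:ℂ) ≠ 0 := by exact_mod_cast (show (d:ℝ) ≠ 0 from hd0) <;> push_cast <;> rfl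
  have hdC1 : (d:ℂ) - 1 ≠ 0 := by
    intro h
    apply hd1
    have := congrArg Complex.re h
    simpa using this
  -- coefficient as a real number
  have hEc : ∀ i, E i = ((((d:ℝ) / ((d:ℝ) - 1)) * p i : ℝ) : ℂ) • (1 - ψ i) := by
    intro i
    rw [hE i]
    congr 1
    push_cast
    ring
  have hcnn : ∀ i, 0 ≤ ((d:ℝ) / ((d:ℝ) - 1)) * p i := fun i =>
    mul_nonneg (div_nonneg (by linarith) (by linarith)) (hp0 i)
  -- projections are PSD
  have hproj : ∀ i, (ψ i).PosSemidef := fun i => proj_psd (hψ i).1 (hψ i).2.1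
  have hcompl : ∀ i, (1 - ψ i).PosSemidef := by
    intro i
    apply proj_psd
    · exact (Matrix.isHermitian_one).sub (hψ i).1
    · have := (hψ i).2.1
      rw [sub_mul, mul_sub, mul_sub, one_mul, one_mul, mul_one, this]
      abel
  -- bound p i ≤ 1/d
  have hbound : ∀ i, p i ≤ (d:ℝ)⁻¹ := by
    intro i
    have hne : ψ i ≠ 0 := by
      intro h
      have := (hψ i).2.2
      rw [h] at this
      simp [Matrix.rank_zero] at this
    apply bound_lemma (hψ i).2.1 hne
    have hsum : (((d:ℝ)⁻¹ : ℝ) : ℂ) • (1 : Matrix (Fin d) (Fin d) ℂ) - ((p i : ℝ) : ℂ) • ψ i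
        = ∑ j ∈ Finset.univ.erase i, (p j : ℂ) • ψ j := by
      have := Finset.add_sum_erase Finset.univ (fun j => (p j : ℂ) • ψ j) (Finset.mem_univ i)
      rw [hmix] at this
      push_cast
      rw [← this]
      abel
    rw [hsum]
    refine Finset.sum_induction _ _ (fun a b ha hb => ha.add hb) Matrix.PosSemidef.zero ?_
    exact fun j _ => smul_psd (hproj j) (hp0 j)
  refine ⟨fun i => ⟨?_, ?_⟩, ?_, fun i => ?_⟩
  · rw [hEc i]
    exact smul_psd (hcompl i) (hcnn i)
  · set c : ℝ := ((d:ℝ) / ((d:ℝ) - 1)) * p i with hc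
    have hc1 : c ≤ 1 := by
      have h1 : (d:ℝ) * p i ≤ 1 := by
        nlinarith [hbound i, mul_inv_cancel₀ hd0]
      rw [hc, div_mul_eq_mul_div, div_le_one (by linarith)]
      nlinarith
    have key : (1 : Matrix (Fin d) (Fin d) ℂ) - E i
        = (((1 - c : ℝ)) : ℂ) • (1 : Matrix (Fin d) (Fin d) ℂ) + ((c : ℝ) : ℂ) • ψ i := by
      rw [hEc i, ← hc, Complex.ofReal_sub, Complex.ofReal_one]
      module
    rw [key]
    exact (smul_psd Matrix.PosSemidef.one (by linarith)).add (smul_psd (hproj i) (hcnn i))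
  · have hsum1 : ∑ i, ((p i : ℝ) : ℂ) = 1 := by
      rw [← Complex.ofReal_sum, hp1, Complex.ofReal_one]
    calc ∑ i, E i = ((d:ℂ) / ((d:ℂ) - 1)) • ∑ i, (p i : ℂ) • (1 - ψ i) := by
          simp_rw [hE, mul_smul, Finset.smul_sum]
      _ = ((d:ℂ) / ((d:ℂ) - 1)) • ((1 : Matrix (Fin d) (Fin d) ℂ) - (d:ℂ)⁻¹ • 1) := by
          congr 1
          simp_rw [smul_sub, Finset.sum_sub_distrib, ← Finset.sum_smul, hsum1, hmix, one_smul]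
      _ = 1 := by
          rw [smul_sub, smul_smul, ← sub_smul]
          rw [show (d:ℂ) / ((d:ℂ) - 1) - (d:ℂ) / ((d:ℂ) - 1) * (d:ℂ)⁻¹ = 1 by
            field_simp]
          exact one_smul _ _
  · rw [hE i, mul_smul_comm, mul_sub, mul_one, (hψ i).2.1, sub_self, smul_zero,
      Matrix.trace_zero]
end

section
/- (Hardy's ontological excess baggage theorem.) Let d ≥ 2 and let Λ be a measurable space. Suppose that to every unit vector u ∈ ℂ^d there are assigned a probability measure μ_u on Λ and a measurable function ξ_u : Λ → ℝ with 0 ≤ ξ_u ≤ 1, such that for all unit vectors u, v: ∫_Λ ξ_v dμ_u = |⟨v, u⟩|². Then Λ is infinite. -/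
open MeasureTheory

theorem stmt_7 (d : ℕ) (hd : 2 ≤ d) (Λ : Type*) [MeasurableSpace Λ]
    (μ : EuclideanSpace ℂ (Fin d) → Measure Λ)
    (ξ : EuclideanSpace ℂ (Fin d) → Λ → ℝ)
    (hμ : ∀ u, ‖u‖ = 1 → IsProbabilityMeasure (μ u))
    (hξmeas : ∀ v, Measurable (ξ v))
    (hξ01 : ∀ v l, ξ v l ∈ Set.Icc (0 : ℝ) 1)
    (hBorn : ∀ u v : EuclideanSpace ℂ (Fin d), ‖u‖ = 1 → ‖v‖ = 1 →
      ∫ l, ξ v l ∂(μ u) = ‖(inner ℂ v u : ℂ)‖ ^ 2) :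
    Infinite Λ := by
  by_contra hinf
  rw [not_infinite_iff_finite] at hinf
  set i0 : Fin d := ⟨0, by omega⟩ with hi0
  set i1 : Fin d := ⟨1, by omega⟩ with hi1
  have hne : i0 ≠ i1 := by simp [hi0, hi1, Fin.ext_iff]
  set E : Fin d → EuclideanSpace ℂ (Fin d) := fun i => EuclideanSpace.single i 1 with hE
  set v : ℝ → EuclideanSpace ℂ (Fin d) :=
    fun t => (Real.cos t : ℂ) • E i0 + (Real.sin t : ℂ) • E i1 with hv
  have hinner : ∀ s t : ℝ, (inner ℂ (v s) (v t) : ℂ) = (Real.cos (s - t) : ℂ) := by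
    intro s t
    simp only [hv, hE, inner_add_left, inner_add_right, inner_smul_left, inner_smul_right,
      EuclideanSpace.inner_single_left, EuclideanSpace.single_apply, hne, hne.symm,
      if_true, if_false, Complex.conj_ofReal, map_one]
    push_cast [Real.cos_sub]
    ring
  have hnorm : ∀ t : ℝ, ‖v t‖ = 1 := by
    intro t
    have h := hinner t t
    rw [inner_self_eq_norm_sq_to_K] at h
    simp at h
    rcases h with h | h
    · exact h
    · exfalso
      have h2 : ‖v t‖ = -1 := by exact_mod_cast h
      nlinarith [norm_nonneg (v t)]
  have hint : ∀ s t : ℝ, Integrable (ξ (v t)) (μ (v s)) := by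
    intro s t
    haveI := hμ _ (hnorm s)
    refine Integrable.mono' (integrable_const (1 : ℝ)) (hξmeas _).aestronglyMeasurable ?_
    filter_upwards with l
    have h := hξ01 (v t) l
    rw [Real.norm_eq_abs, abs_le]
    exact ⟨by linarith [h.1], h.2⟩
  -- ξ (v t) = 1 wherever μ (v t) has positive mass
  have hae : ∀ t : ℝ, ∀ l : Λ, μ (v t) {l} ≠ 0 → ξ (v t) l = 1 := by
    intro t l hl
    haveI := hμ _ (hnorm t)
    have hI : ∫ l, (1 - ξ (v t) l) ∂(μ (v t)) = 0 := by
      rw [integral_sub (integrable_const 1) (hint t t), integral_const]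
      have hb := hBorn (v t) (v t) (hnorm t) (hnorm t)
      rw [hinner t t] at hb
      simp [hb]
    have h0 : (fun l => 1 - ξ (v t) l) =ᵐ[μ (v t)] 0 :=
      (integral_eq_zero_iff_of_nonneg (f := fun l => 1 - ξ (v t) l)
        (fun l => by have := (hξ01 (v t) l).2; simp only [Pi.zero_apply]; linarith)
        (by
          exact (integrable_const (1 : ℝ)).sub (hint t t))).mp hI
    have hz : μ (v t) {a | ¬ (1 - ξ (v t) a = 0)} = 0 := ae_iff.mp h0
    by_contra hne1
    apply hl
    refine le_antisymm ?_ zero_le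
    rw [← hz]
    refine measure_mono ?_
    intro x hx
    simp only [Set.mem_singleton_iff] at hx
    subst hx
    simp only [Set.mem_setOf_eq]
    intro h
    exact hne1 (by linarith)
  set T : ℝ → Set Λ := fun t => {l | μ (v t) {l} ≠ 0} with hT
  have hTinj : Set.InjOn T (Set.Icc (0 : ℝ) 1) := by
    intro s hs t ht hTeq
    by_contra hst
    have hπ := Real.pi_gt_three
    have hx1 : |s - t| ≤ 1 := by
      rw [abs_le]
      constructor <;> [linarith [hs.1, ht.2]; linarith [hs.2, ht.1]]
    have hxne : s - t ≠ 0 := sub_ne_zero.mpr hst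
    have hcpos : 0 < Real.cos (s - t) := by
      apply Real.cos_pos_of_mem_Ioo
      constructor <;> [nlinarith [abs_le.mp hx1]; nlinarith [abs_le.mp hx1]]
    have hclt : Real.cos (s - t) < 1 := by
      rcases lt_or_eq_of_le (Real.cos_le_one (s - t)) with h | h
      · exact h
      · exfalso
        exact hxne ((Real.cos_eq_one_iff_of_lt_of_lt (by nlinarith [abs_le.mp hx1])
          (by nlinarith [abs_le.mp hx1])).mp h)
    have hc : Real.cos (s - t) ^ 2 < 1 := by nlinarith
    -- ξ (v t) = 1 a.e. μ (v s)
    have hnull : μ (v s) {l | ¬ ξ (v t) l = 1} = 0 := by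
      have hsub : {l | ¬ ξ (v t) l = 1} ⊆ {l : Λ | μ (v s) {l} = 0} := by
        intro l hl
        by_contra h
        exact hl (hae t l (by
          have : l ∈ T s := h
          rw [hTeq] at this
          exact this))
      refine le_antisymm (le_trans (measure_mono hsub) ?_) zero_le
      set A : Set Λ := {l : Λ | μ (v s) {l} = 0} with hA
      have hcount : Countable A := Set.Countable.to_subtype (Set.to_countable A)
      have hU : A = ⋃ (x : A), {(x : Λ)} := by
        ext y; simp
      calc μ (v s) A ≤ ∑' (x : A), μ (v s) {(x : Λ)} := by
            refine le_trans (measure_mono ?_) (measure_iUnion_le _)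
            intro y hy
            exact Set.mem_iUnion.mpr ⟨⟨y, hy⟩, rfl⟩
        _ = 0 := by
            convert tsum_zero with x
            exact x.2
    have h1 : ∫ l, ξ (v t) l ∂(μ (v s)) = 1 := by
      haveI := hμ _ (hnorm s)
      rw [integral_congr_ae (g := fun _ => (1 : ℝ)) (ae_iff.mpr (by simpa using hnull))]
      simp
    have h2 := hBorn (v s) (v t) (hnorm s) (hnorm t)
    rw [hinner t s, h1] at h2
    rw [Complex.norm_real, Real.norm_eq_abs, ← Real.cos_neg, neg_sub, sq_abs] at h2
    exact absurd h2.symm (ne_of_lt hc)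
  have hfin : (Set.Icc (0 : ℝ) 1).Finite := by
    have : (T '' Set.Icc (0 : ℝ) 1).Finite := Set.toFinite _
    exact Set.Finite.of_finite_image this hTinj
  exact Set.Icc_infinite (by norm_num : (0:ℝ) < 1) hfin
end

section
/- (Generalized Fine theorem.) Let X be a finite type of variables and O a finite nonempty type of outcomes, let 𝒞 be a marginal scenario on X, and let (p_C)_{C∈𝒞} be a marginal model. Then the following are equivalent: (a) the model is noncontextual, i.e., there exist a measurable space Λ, a probability measure μ on Λ, and measurable response functions ξ_x(·|λ) for x ∈ X (with ξ_x(o|λ) ≥ 0 and Σ_{o∈O} ξ_x(o|λ) = 1 for every λ) such that for every C ∈ 𝒞 and every c : C → O, p_C(c) = ∫_Λ ∏_{x∈C} ξ_x(c(x)|λ) dμ(λ); (b) there exists a global joint distribution, i.e., a function P : (X → O) → ℝ with P ≥ 0 and Σ_g P(g) = 1 such that for every C ∈ 𝒞 and every c : C → O, p_C(c) = Σ_{g : X→O, g restricted to C equals c} P(g). -/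
open MeasureTheory

section Aux
variable {X O : Type} [Fintype X] [DecidableEq X] [Fintype O] [DecidableEq O]

lemma sum_filter_prod_aux (C : Finset X) (c : ↥C → O) (f : X → O → ℝ)
    (hf : ∀ x, ∑ o, f x o = 1) :
    ∑ g ∈ Finset.univ.filter (fun g : X → O => ∀ x : ↥C, g x.1 = c x),
      ∏ x : X, f x (g x) = ∏ x : ↥C, f x.1 (c x) := by
  classical
  rw [Finset.sum_bij' (i := fun (g : X → O) _ => fun x : ↥(Cᶜ) => g x.1)
    (j := fun (h : ↥(Cᶜ) → O) _ =>
      fun x => if hx : x ∈ C then c ⟨x, hx⟩ else h ⟨x, Finset.mem_compl.mpr hx⟩)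
    (s := Finset.univ.filter (fun g : X → O => ∀ x : ↥C, g x.1 = c x))
    (t := Finset.univ)
    (g := fun h => ∏ x : X, f x
      (if hx : x ∈ C then c ⟨x, hx⟩ else h ⟨x, Finset.mem_compl.mpr hx⟩))]
  · have split : ∀ h : ↥(Cᶜ) → O,
        ∏ x : X, f x (if hx : x ∈ C then c ⟨x, hx⟩ else h ⟨x, Finset.mem_compl.mpr hx⟩) =
          (∏ x : ↥C, f x.1 (c x)) * ∏ x : ↥(Cᶜ), f x.1 (h x) := by
      intro h
      rw [← Finset.prod_mul_prod_compl C (fun x => f x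
        (if hx : x ∈ C then c ⟨x, hx⟩ else h ⟨x, Finset.mem_compl.mpr hx⟩))]
      congr 1
      · rw [Finset.univ_eq_attach, ← Finset.prod_attach C]
        exact Finset.prod_congr rfl (fun x _ => by simp [x.2])
      · rw [Finset.univ_eq_attach, ← Finset.prod_attach Cᶜ]
        refine Finset.prod_congr rfl (fun x _ => ?_)
        have hx : x.1 ∉ C := Finset.mem_compl.mp x.2
        simp [hx]
    simp only [split]
    rw [← Finset.mul_sum]
    have : ∑ h : ↥(Cᶜ) → O, ∏ x : ↥(Cᶜ), f x.1 (h x) = 1 := by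
      rw [← Fintype.piFinset_univ, ← Finset.prod_univ_sum]
      simp [hf]
    rw [this, mul_one]
  · intro a ha; simp
  · intro a ha
    simp only [Finset.mem_filter, Finset.mem_univ, true_and]
    intro x; simp [x.2]
  · intro g hg
    simp only [Finset.mem_filter, Finset.mem_univ, true_and] at hg
    funext x
    by_cases hx : x ∈ C
    · simp only [dif_pos hx]; exact (hg ⟨x, hx⟩).symm
    · simp [hx]
  · intro h hh
    funext x
    have hx : x.1 ∉ C := Finset.mem_compl.mp x.2
    simp [x.2, Finset.mem_compl.mp x.2]
  · intro g hg
    simp only [Finset.mem_filter, Finset.mem_univ, true_and] at hg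
    apply Finset.prod_congr rfl
    intro x _
    congr 1
    by_cases hx : x ∈ C
    · simp only [dif_pos hx]; exact (hg ⟨x, hx⟩)
    · simp [hx]

omit [DecidableEq O] in
lemma sum_all_prod_aux (f : X → O → ℝ) (hf : ∀ x, ∑ o, f x o = 1) :
    ∑ g : X → O, ∏ x : X, f x (g x) = 1 := by
  rw [← Fintype.piFinset_univ, ← Finset.prod_univ_sum]
  simp [hf]

end Aux

theorem stmt_10 {X O : Type} [Fintype X] [DecidableEq X]
    [Fintype O] [DecidableEq O] [Nonempty O]
    -- a marginal scenario: a collection of contexts closed under subsets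
    (𝒞 : Finset (Finset X))
    (hclosed : ∀ C ∈ 𝒞, ∀ C' ⊆ C, C' ∈ 𝒞)
    -- a marginal model: a probability distribution on outcomes for each context…
    (p : (C : Finset X) → (↥C → O) → ℝ)
    (hpos : ∀ C ∈ 𝒞, ∀ c : ↥C → O, 0 ≤ p C c)
    (hnorm : ∀ C ∈ 𝒞, ∑ c : ↥C → O, p C c = 1)
    -- …compatible under taking marginals
    (hmarg : ∀ C C' : Finset X, C ∈ 𝒞 → C' ∈ 𝒞 → ∀ h : C ⊆ C', ∀ c : ↥C → O,
      p C c = ∑ c' ∈ Finset.univ.filter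
        (fun c' : ↥C' → O => ∀ x : ↥C, c' ⟨x.1, h x.2⟩ = c x), p C' c') :
    -- (a) the model is noncontextual …
    (∃ (Λ : Type) (_ : MeasurableSpace Λ) (μ : Measure Λ) (ξ : X → O → Λ → ℝ),
        IsProbabilityMeasure μ ∧
        (∀ x o, Measurable (ξ x o)) ∧
        (∀ x o l, 0 ≤ ξ x o l) ∧
        (∀ x l, ∑ o, ξ x o l = 1) ∧
        (∀ C ∈ 𝒞, ∀ c : ↥C → O,
          p C c = ∫ l, ∏ x : ↥C, ξ x.1 (c x) l ∂μ)) ↔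
    -- (b) …iff there is a global joint distribution with the right marginals
    (∃ P : (X → O) → ℝ, (∀ g, 0 ≤ P g) ∧ (∑ g, P g = 1) ∧
        ∀ C ∈ 𝒞, ∀ c : ↥C → O,
          p C c = ∑ g ∈ Finset.univ.filter
            (fun g : X → O => ∀ x : ↥C, g x.1 = c x), P g) := by
  classical
  constructor
  · rintro ⟨Λ, m, μ, ξ, hμ, hmeas, hξpos, hξsum, hrep⟩
    -- pointwise bound ξ ≤ 1
    have hξle : ∀ x o l, ξ x o l ≤ 1 := by
      intro x o l
      calc ξ x o l ≤ ∑ o', ξ x o' l :=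
            Finset.single_le_sum (fun o' _ => hξpos x o' l) (Finset.mem_univ o)
        _ = 1 := hξsum x l
    -- integrability of products of response functions over any finset index
    have hint : ∀ (s : Finset X) (o : X → O),
        Integrable (fun l => ∏ x ∈ s, ξ x (o x) l) μ := by
      intro s o
      refine ⟨(Finset.measurable_prod s (fun x _ => hmeas x (o x))).aestronglyMeasurable, ?_⟩
      refine HasFiniteIntegral.of_bounded (C := 1) (Filter.Eventually.of_forall fun l => ?_)
      rw [Real.norm_eq_abs, abs_of_nonneg (Finset.prod_nonneg fun x _ => hξpos x (o x) l)]
      exact Finset.prod_le_one (fun x _ => hξpos x (o x) l) (fun x _ => hξle x (o x) l)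
    refine ⟨fun g => ∫ l, ∏ x : X, ξ x (g x) l ∂μ, ?_, ?_, ?_⟩
    · intro g
      exact integral_nonneg fun l => Finset.prod_nonneg fun x _ => hξpos x (g x) l
    · rw [← integral_finset_sum _ (fun g _ => hint Finset.univ g)]
      have : ∀ l : Λ, ∑ g : X → O, ∏ x : X, ξ x (g x) l = 1 := fun l =>
        sum_all_prod_aux (fun x o => ξ x o l) (fun x => hξsum x l)
      simp only [this]
      simp
    · intro C hC c
      rw [hrep C hC c, ← integral_finset_sum _ (fun g hg => hint Finset.univ g)]
      congr 1
      funext l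
      exact (sum_filter_prod_aux C c (fun x o => ξ x o l) (fun x => hξsum x l)).symm
  · rintro ⟨P, hP0, hP1, hPmarg⟩
    letI : MeasurableSpace (X → O) := ⊤
    haveI : MeasurableSingletonClass (X → O) := ⟨fun _ => trivial⟩
    refine ⟨X → O, ⊤, ∑ g : X → O, ENNReal.ofReal (P g) • Measure.dirac g,
      fun x o g => if g x = o then 1 else 0, ?_, ?_, ?_, ?_, ?_⟩
    · constructor
      rw [Measure.finset_sum_apply]
      simp only [Measure.smul_apply, smul_eq_mul]
      have : ∀ g : X → O, Measure.dirac g Set.univ = 1 := fun g => by simp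
      simp only [this, mul_one]
      rw [← ENNReal.ofReal_sum_of_nonneg (fun g _ => hP0 g), hP1, ENNReal.ofReal_one]
    · intro x o; exact measurable_from_top
    · intro x o l; positivity
    · intro x l; simp
    · intro C hC c
      rw [hPmarg C hC c]
      rw [integral_finset_sum_measure (fun g _ => (Integrable.smul_measure
        (Integrable.of_finite) ENNReal.ofReal_ne_top))]
      have : ∀ g : X → O,
          (∫ l, ∏ x : ↥C, (if l x.1 = c x then (1:ℝ) else 0)
            ∂(ENNReal.ofReal (P g) • Measure.dirac g)) =
          P g * ∏ x : ↥C, (if g x.1 = c x then (1:ℝ) else 0) := by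
        intro g
        rw [integral_smul_measure, integral_dirac, smul_eq_mul,
          ENNReal.toReal_ofReal (hP0 g)]
      rw [Finset.sum_congr rfl (fun g _ => this g)]
      simp only [Finset.prod_boole]
      rw [Finset.sum_filter]
      apply Finset.sum_congr rfl
      intro g _
      by_cases h : ∀ x : ↥C, g x.1 = c x
      · rw [if_pos h, if_pos (fun x _ => h x), mul_one]
      · rw [if_neg h, if_neg (fun hh => h (fun x => hh x (Finset.mem_univ x))), mul_zero]
end

section
/- Three binary random variables cannot be pairwise perfectly anticorrelated: there is no function P : (Fin 3 → Bool) → ℝ with P ≥ 0 and Σ_g P(g) = 1 such that for every pair of distinct indices i, j ∈ Fin 3, Σ_{g : g(i) = g(j)} P(g) = 0. (By the generalized Fine theorem, this proves that Specker's over-protective-seer marginal model — uniform single-variable marginals and perfect anticorrelation in each of the three pairwise contexts — is contextual.) -/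
theorem stmt_11 : ¬ ∃ P : (Fin 3 → Bool) → ℝ,
    (∀ g, 0 ≤ P g) ∧ (∑ g, P g = 1) ∧
    ∀ i j : Fin 3, i ≠ j →
      ∑ g ∈ Finset.univ.filter (fun g : Fin 3 → Bool => g i = g j), P g = 0 := by
  rintro ⟨P, hpos, hsum, hanti⟩
  have hzero : ∀ g : Fin 3 → Bool, P g = 0 := by
    intro g
    have hpair : ∃ i j : Fin 3, i ≠ j ∧ g i = g j := by
      by_cases h01 : g 0 = g 1
      · exact ⟨0, 1, by decide, h01⟩
      by_cases h02 : g 0 = g 2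
      · exact ⟨0, 2, by decide, h02⟩
      refine ⟨1, 2, by decide, ?_⟩
      cases h0 : g 0 <;> cases h1 : g 1 <;> cases h2 : g 2 <;> simp_all
    obtain ⟨i, j, hij, hg⟩ := hpair
    have := hanti i j hij
    have hmem : g ∈ Finset.univ.filter (fun g : Fin 3 → Bool => g i = g j) := by
      simp [hg]
    exact (Finset.sum_eq_zero_iff_of_nonneg (fun x _ => hpos x)).mp this g hmem
  simp [hzero] at hsum
end

section
/- (Parity core of the Kochen–Specker theorem via the 18-projector proof.) Let V be a finite type, let m be an odd natural number, and let C : Fin m → Finset V be a family of contexts such that every v ∈ V belongs to exactly two of the sets C(i). Then there is no function f : V → Bool such that for every i, exactly one element v ∈ C(i) has f(v) = true. (In the Cabello–Estebaranz–García-Alcaine proof, V is a set of 18 projectors in dimension 4 arranged in 9 orthogonal bases, each projector occurring in exactly two bases; the rule that exactly one outcome of each PVM receives the value 1 is therefore uncolourable.) -/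
theorem stmt_12 {V : Type*} [Fintype V] [DecidableEq V] (m : ℕ) (hm : Odd m)
    (C : Fin m → Finset V)
    (htwo : ∀ v : V, (Finset.univ.filter (fun i => v ∈ C i)).card = 2) :
    ¬ ∃ f : V → Bool, ∀ i : Fin m,
      ((C i).filter (fun v => f v = true)).card = 1 := by
  rintro ⟨f, hf⟩
  have hsum : ∑ i : Fin m, ((C i).filter (fun v => f v = true)).card = m := by
    simp [hf]
  have hkey : ∑ i : Fin m, ((C i).filter (fun v => f v = true)).card
      = ∑ v ∈ Finset.univ.filter (fun v => f v = true),
          (Finset.univ.filter (fun i => v ∈ C i)).card := by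
    simp only [Finset.card_filter]
    rw [Finset.sum_comm' (s := Finset.univ) (t := fun i => C i)
      (t' := Finset.univ) (s' := fun v => Finset.univ.filter (fun i => v ∈ C i))]
    · simp [Finset.sum_filter, Finset.sum_ite_eq, Finset.sum_comm]
    · intro i v
      simp [and_comm]
  have heven : Even (∑ i : Fin m, ((C i).filter (fun v => f v = true)).card) := by
    rw [hkey]
    rw [Finset.sum_congr rfl (fun v _ => htwo v), Finset.sum_const, smul_eq_mul]
    exact Even.mul_left even_two _
  rw [hsum] at heven
  exact (Nat.not_even_iff_odd.mpr hm) heven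
end

section
/- (Algebraic core of the n-cycle Boole inequalities.) Let n ≥ 1 and let α, γ : Fin n → ℝ with α_i ∈ {−1,1} and γ_i ∈ {−1,1} for all i, where the number of indices i with γ_i = −1 is odd. Define β_i = α_i·α_{i+1} (indices modulo n). Then Σ_{i=0}^{n−1} γ_i·β_i ≤ n − 2. (Consequently every noncontextual marginal model for the n-cycle satisfies the Boole inequality Σ_i γ_i⟨X_iX_{i+1}⟩ ≤ n − 2.) -/
theorem stmt_16 (n : ℕ) [NeZero n] (hn : 1 ≤ n) (α γ : Fin n → ℝ)
    (hα : ∀ i, α i = -1 ∨ α i = 1) (hγ : ∀ i, γ i = -1 ∨ γ i = 1)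
    (hodd : Odd (Finset.univ.filter (fun i => γ i = -1)).card) :
    ∑ i : Fin n, γ i * (α i * α (i + 1)) ≤ (n : ℝ) - 2 := by
  set t : Fin n → ℝ := fun i => γ i * (α i * α (i + 1)) with ht
  have htval : ∀ i, t i = -1 ∨ t i = 1 := by
    intro i
    rcases hγ i with h1 | h1 <;> rcases hα i with h2 | h2 <;>
      rcases hα (i + 1) with h3 | h3 <;> simp [ht, h1, h2, h3]
  -- product of shifted α equals product of α
  have hshift : ∏ i : Fin n, α (i + 1) = ∏ i : Fin n, α i :=
    Fintype.prod_equiv (Equiv.addRight (1 : Fin n)) _ _ (fun i => rfl)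
  have hα2 : (∏ i : Fin n, α i) * (∏ i : Fin n, α i) = 1 := by
    rw [← Finset.prod_mul_distrib]
    apply Finset.prod_eq_one
    intro i _
    rcases hα i with h | h <;> simp [h]
  have hγprod : ∏ i : Fin n, γ i = -1 := by
    rw [← Finset.prod_filter_mul_prod_filter_not Finset.univ (fun i => γ i = -1)]
    have h1 : ∏ i ∈ Finset.univ.filter (fun i => γ i = -1), γ i =
        (-1 : ℝ) ^ (Finset.univ.filter (fun i => γ i = -1)).card := by
      rw [Finset.prod_congr rfl (fun i hi => (Finset.mem_filter.mp hi).2),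
        Finset.prod_const]
    have h2 : ∏ i ∈ Finset.univ.filter (fun i => ¬ γ i = -1), γ i = 1 := by
      apply Finset.prod_eq_one
      intro i hi
      rcases hγ i with h | h
      · exact absurd h (Finset.mem_filter.mp hi).2
      · exact h
    rw [h1, h2, hodd.neg_one_pow, mul_one]
  have hprod : ∏ i : Fin n, t i = -1 := by
    simp only [ht]
    rw [Finset.prod_mul_distrib, Finset.prod_mul_distrib, hshift, hγprod, hα2]
    ring
  -- there is an index where t is -1
  have hex : ∃ i, t i = -1 := by
    by_contra h
    push_neg at h
    have : ∀ i, t i = 1 := fun i => (htval i).resolve_left (h i)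
    rw [Finset.prod_eq_one (fun i _ => this i)] at hprod
    norm_num at hprod
  obtain ⟨i₀, hi₀⟩ := hex
  rw [← Finset.add_sum_erase _ t (Finset.mem_univ i₀), hi₀]
  have hsum : ∑ j ∈ Finset.univ.erase i₀, t j ≤ (n : ℝ) - 1 := by
    calc ∑ j ∈ Finset.univ.erase i₀, t j ≤ ∑ j ∈ Finset.univ.erase i₀, 1 := by
          apply Finset.sum_le_sum
          intro j _
          rcases htval j with h | h <;> rw [h] <;> norm_num
      _ = (n : ℝ) - 1 := by
          rw [Finset.sum_const, Finset.card_erase_of_mem (Finset.mem_univ i₀)]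
          simp [Nat.cast_sub hn]
  linarith
end

section
/- (The n-cycle Boole inequalities are facets of the noncontextual polytope.) Fix n ≥ 3 and let γ ∈ {−1,1}^n have an odd number of entries equal to −1. Then every α ∈ {−1,1}^n satisfies Σ_{i} γ_i·α_i·α_{i+1} ≤ n − 2 (indices modulo n), and there exist 2n vectors α ∈ {−1,1}^n whose associated noncontextual vertices v(α) = (α, β(α)) ∈ ℝ^n × ℝ^n are affinely independent and each satisfies Σ_i γ_i·α_i·α_{i+1} = n − 2. Hence each such inequality determines a facet (a face of dimension 2n − 1) of the noncontextual polytope, the convex hull of the 2^n points v(α). -/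
open Finset
open Fin.NatCast

namespace Stmt17Aux

variable {n : ℕ} [NeZero n]

noncomputable def g (γ : Fin n → ℝ) (m : ℕ) : ℝ := ∏ k ∈ Finset.range m, γ (k : Fin n)

def sg (n : ℕ) (j : Fin (2*n)) : ℝ := if (j:ℕ) < n then 1 else -1

def ep (k m : ℕ) : ℝ := if k < m then -1 else 1

noncomputable def A (γ : Fin n → ℝ) (j : Fin (2*n)) (i : Fin n) : ℝ :=
  sg n j * (g γ (i:ℕ) * ep ((j:ℕ) % n) (i:ℕ))

lemma g_pm (γ : Fin n → ℝ) (hγ : ∀ i, γ i = -1 ∨ γ i = 1) (m : ℕ) :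
    g γ m = -1 ∨ g γ m = 1 := by
  induction m with
  | zero => right; simp [g]
  | succ m ih =>
    rw [g, Finset.prod_range_succ, ← g]
    rcases ih with h | h <;> rcases hγ ((m : Fin n)) with h2 | h2 <;> rw [h, h2] <;> norm_num

lemma sg_sq (j : Fin (2*n)) : sg n j * sg n j = 1 := by
  unfold sg; split_ifs <;> norm_num

lemma ep_pm (k m : ℕ) : ep k m = -1 ∨ ep k m = 1 := by
  unfold ep; split_ifs <;> simp

lemma ep_sub (k m : ℕ) : ep k m - ep k (m+1) = if k = m then 2 else 0 := by
  unfold ep; split_ifs <;> first | (exfalso; omega) | norm_num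

lemma ep_wrap (k m : ℕ) (hk : k ≤ m) : ep k m + ep k 0 = if k = m then 2 else 0 := by
  unfold ep; split_ifs <;> first | (exfalso; omega) | norm_num

lemma ep_mul (k m : ℕ) : ep k m * ep k (m+1) = if m = k then -1 else 1 := by
  unfold ep; split_ifs <;> first | (exfalso; omega) | norm_num

lemma ep_mul_wrap (k m : ℕ) (hk : k ≤ m) : ep k m * ep k 0 = if m = k then 1 else -1 := by
  unfold ep; split_ifs <;> first | (exfalso; omega) | norm_num

lemma prod_univ_neg_one (γ : Fin n → ℝ) (hγ : ∀ i, γ i = -1 ∨ γ i = 1)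
    (hodd : Odd (Finset.univ.filter (fun i => γ i = -1)).card) :
    ∏ i : Fin n, γ i = -1 := by
  rw [← Finset.prod_filter_mul_prod_filter_not Finset.univ (fun i => γ i = -1) γ]
  have h1 : ∏ i ∈ Finset.univ.filter (fun i => γ i = -1), γ i
      = (-1 : ℝ) ^ (Finset.univ.filter (fun i => γ i = -1)).card := by
    rw [Finset.prod_congr rfl (fun i hi => (Finset.mem_filter.mp hi).2), Finset.prod_const]
  have h2 : ∏ i ∈ Finset.univ.filter (fun i => ¬ γ i = -1), γ i = 1 := by
    apply Finset.prod_eq_one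
    intro i hi
    exact (hγ i).resolve_left (Finset.mem_filter.mp hi).2
  rw [h1, h2, hodd.neg_one_pow, mul_one]

lemma g_n (γ : Fin n → ℝ) (hγ : ∀ i, γ i = -1 ∨ γ i = 1)
    (hodd : Odd (Finset.univ.filter (fun i => γ i = -1)).card) :
    g γ n = -1 := by
  rw [g, ← Fin.prod_univ_eq_prod_range (fun k => γ (k : Fin n)) n]
  rw [show (fun i : Fin n => γ ((i:ℕ) : Fin n)) = γ from funext fun i => by
    rw [Fin.cast_val_eq_self]]
  exact prod_univ_neg_one γ hγ hodd

lemma val_add_one (hn : 1 < n) (i : Fin n) :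
    ((i+1 : Fin n) : ℕ) = if (i:ℕ)+1 < n then (i:ℕ)+1 else 0 := by
  have h1 : ((1 : Fin n) : ℕ) = 1 := by rw [Fin.val_one']; exact Nat.mod_eq_of_lt hn
  rw [Fin.val_add, h1]
  split_ifs with h
  · exact Nat.mod_eq_of_lt h
  · have : (i:ℕ) + 1 = n := by have := i.isLt; omega
    rw [this, Nat.mod_self]

lemma A_pm (γ : Fin n → ℝ) (hγ : ∀ i, γ i = -1 ∨ γ i = 1) (j : Fin (2*n)) (i : Fin n) :
    A γ j i = -1 ∨ A γ j i = 1 := by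
  unfold A sg
  rcases g_pm γ hγ (i:ℕ) with h | h <;> rcases ep_pm ((j:ℕ)%n) (i:ℕ) with h2 | h2 <;>
    rw [h, h2] <;> split_ifs <;> norm_num

lemma term_eq (γ : Fin n → ℝ) (hγ : ∀ i, γ i = -1 ∨ γ i = 1)
    (hodd : Odd (Finset.univ.filter (fun i => γ i = -1)).card)
    (hn : 3 ≤ n) (j : Fin (2*n)) (i : Fin n) :
    γ i * (A γ j i * A γ j (i+1)) = if (i:ℕ) = (j:ℕ) % n then -1 else 1 := by
  have hval := val_add_one (by omega : 1 < n) i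
  have hγsq : γ i * γ i = 1 := by rcases hγ i with h | h <;> rw [h] <;> norm_num
  have hgsq : g γ (i:ℕ) * g γ (i:ℕ) = 1 := by
    rcases g_pm γ hγ (i:ℕ) with h | h <;> rw [h] <;> norm_num
  by_cases h : (i:ℕ) + 1 < n
  · rw [if_pos h] at hval
    have hgs : g γ ((i:ℕ)+1) = g γ (i:ℕ) * γ i := by
      rw [g, Finset.prod_range_succ, ← g, Fin.cast_val_eq_self]
    have : γ i * (A γ j i * A γ j (i+1))
        = (sg n j * sg n j) * (g γ (i:ℕ) * g γ (i:ℕ)) * (γ i * γ i)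
          * (ep ((j:ℕ)%n) (i:ℕ) * ep ((j:ℕ)%n) ((i:ℕ)+1)) := by
      unfold A; rw [hval, hgs]; ring
    rw [this, sg_sq, hgsq, hγsq, ep_mul, one_mul, one_mul, one_mul]
  · have hiv : (i:ℕ) = n - 1 := by have := i.isLt; omega
    rw [if_neg h] at hval
    have hgn : g γ (i:ℕ) * γ i = -1 := by
      have : g γ ((i:ℕ)+1) = g γ (i:ℕ) * γ i := by
        rw [g, Finset.prod_range_succ, ← g, Fin.cast_val_eq_self]
      rw [← this]
      have : (i:ℕ) + 1 = n := by have := i.isLt; omega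
      rw [this]; exact g_n γ hγ hodd
    have hg0 : g γ 0 = 1 := by simp [g]
    have : γ i * (A γ j i * A γ j (i+1))
        = (sg n j * sg n j) * (g γ (i:ℕ) * γ i) * g γ 0
          * (ep ((j:ℕ)%n) (i:ℕ) * ep ((j:ℕ)%n) 0) := by
      unfold A; rw [hval]; ring
    have hk : (j:ℕ) % n < n := Nat.mod_lt _ (by omega)
    rw [this, sg_sq, hgn, hg0, ep_mul_wrap _ _ (by omega)]
    split_ifs <;> norm_num

lemma mod_eq (j : Fin (2*n)) : (j:ℕ) % n = if (j:ℕ) < n then (j:ℕ) else (j:ℕ) - n := by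
  split_ifs with h
  · exact Nat.mod_eq_of_lt h
  · rw [Nat.mod_eq_sub_mod (le_of_not_gt h), Nat.mod_eq_of_lt]
    have := j.isLt; omega

lemma sg_opp (j j₀ : Fin (2*n)) (hne : j ≠ j₀) (hm : (j:ℕ) % n = (j₀:ℕ) % n) :
    sg n j = -sg n j₀ := by
  have e1 := mod_eq j
  have e2 := mod_eq j₀
  have hne' : (j:ℕ) ≠ (j₀:ℕ) := fun h => hne (Fin.ext h)
  rw [e1, e2] at hm
  have hj : (j:ℕ) < 2*n := j.isLt
  have hj₀ : (j₀:ℕ) < 2*n := j₀.isLt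
  unfold sg
  split_ifs at hm ⊢ <;> first | (exfalso; omega) | norm_num

end Stmt17Aux

theorem stmt_17 (n : ℕ) [NeZero n] (hn : 3 ≤ n) (γ : Fin n → ℝ)
    (hγ : ∀ i, γ i = -1 ∨ γ i = 1)
    (hodd : Odd (Finset.univ.filter (fun i => γ i = -1)).card) :
    -- the Boole inequality holds for every deterministic assignment…
    (∀ α : Fin n → ℝ, (∀ i, α i = -1 ∨ α i = 1) →
      ∑ i : Fin n, γ i * (α i * α (i + 1)) ≤ (n : ℝ) - 2) ∧
    -- …and it is saturated by 2n affinely independent noncontextual vertices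
    ∃ A : Fin (2 * n) → Fin n → ℝ,
      (∀ j i, A j i = -1 ∨ A j i = 1) ∧
      AffineIndependent ℝ (fun j =>
        ((A j, fun i => A j i * A j (i + 1)) : (Fin n → ℝ) × (Fin n → ℝ))) ∧
      ∀ j, ∑ i : Fin n, γ i * (A j i * A j (i + 1)) = (n : ℝ) - 2 := by
  open Stmt17Aux in
  constructor
  · -- Part 1: the inequality
    intro α hα
    set tf : Fin n → ℝ := fun i => γ i * (α i * α (i + 1)) with htf
    have htpm : ∀ i, tf i = -1 ∨ tf i = 1 := by
      intro i
      rcases hγ i with h1 | h1 <;> rcases hα i with h2 | h2 <;>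
        rcases hα (i+1) with h3 | h3 <;> simp [htf, h1, h2, h3]
    have hprod : ∏ i : Fin n, tf i = -1 := by
      have e1 : ∏ i : Fin n, tf i
          = (∏ i : Fin n, γ i) * ((∏ i : Fin n, α i) * ∏ i : Fin n, α (i+1)) := by
        rw [← Finset.prod_mul_distrib, ← Finset.prod_mul_distrib]
      have e2 : ∏ i : Fin n, α (i+1) = ∏ i : Fin n, α i := by
        have := Equiv.prod_comp (Equiv.addRight (1 : Fin n)) α
        simpa using this
      have e3 : (∏ i : Fin n, α i) * (∏ i : Fin n, α i) = 1 := by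
        rw [← Finset.prod_mul_distrib]
        apply Finset.prod_eq_one
        intro i _
        rcases hα i with h | h <;> rw [h] <;> norm_num
      rw [e1, e2, e3, prod_univ_neg_one γ hγ hodd, mul_one]
    have hex : ∃ i₀, tf i₀ = -1 := by
      by_contra hcon
      push_neg at hcon
      have hall : ∀ i ∈ Finset.univ, tf i = 1 :=
        fun i _ => (htpm i).resolve_left (hcon i)
      rw [Finset.prod_congr rfl hall, Finset.prod_const_one] at hprod
      norm_num at hprod
    obtain ⟨i₀, hi₀⟩ := hex
    have hsum : ∑ i : Fin n, tf i
        = (∑ i ∈ Finset.univ.erase i₀, tf i) + tf i₀ :=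
      (Finset.sum_erase_add _ _ (Finset.mem_univ i₀)).symm
    have hb : ∑ i ∈ Finset.univ.erase i₀, tf i ≤ (n : ℝ) - 1 := by
      have := Finset.sum_le_card_nsmul (Finset.univ.erase i₀) tf 1
        (fun i _ => by rcases htpm i with h | h <;> rw [h] <;> norm_num)
      rw [Finset.card_erase_of_mem (Finset.mem_univ i₀), Finset.card_univ,
        Fintype.card_fin] at this
      have hcast : ((n - 1 : ℕ) : ℝ) = (n : ℝ) - 1 := by
        have : 1 ≤ n := by omega
        push_cast [this]
        ring
      calc ∑ i ∈ Finset.univ.erase i₀, tf i ≤ (n-1 : ℕ) • (1:ℝ) := this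
        _ = (n : ℝ) - 1 := by rw [nsmul_eq_mul, mul_one, hcast]
    rw [hsum]
    rw [hi₀]
    linarith
  · -- Part 2: the 2n affinely independent saturating vertices
    refine ⟨A γ, fun j i => A_pm γ hγ j i, ?_, ?_⟩
    · -- affine independence
      rw [affineIndependent_iff]
      intro t w hw0 hwp j₀ hj₀
      set k₀ : ℕ := (j₀ : ℕ) % n with hk₀def
      have hk₀ : k₀ < n := Nat.mod_lt _ (by omega)
      -- component equations
      have h1 : ∀ i : Fin n, ∑ j ∈ t, w j * A γ j i = 0 := by
        intro i
        have := congrFun (congrArg Prod.fst hwp) i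
        simpa [Prod.fst_sum, Finset.sum_apply, smul_eq_mul] using this
      have h2 : ∀ i : Fin n, ∑ j ∈ t, w j * (A γ j i * A γ j (i+1)) = 0 := by
        intro i
        have := congrFun (congrArg Prod.snd hwp) i
        simpa [Prod.snd_sum, Finset.sum_apply, smul_eq_mul] using this
      -- the "β" equations give the plus-sums
      have Splus : ∀ i : Fin n,
          ∑ j ∈ t, (if ((i:ℕ) = (j:ℕ) % n) then w j else 0) = 0 := by
        intro i
        have e : ∑ j ∈ t, w j * (if ((i:ℕ) = (j:ℕ) % n) then (-1:ℝ) else 1) = 0 := by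
          have : ∀ j ∈ t, w j * (if ((i:ℕ) = (j:ℕ) % n) then (-1:ℝ) else 1)
              = γ i * (w j * (A γ j i * A γ j (i+1))) := by
            intro j _
            rw [← term_eq γ hγ hodd hn j i]
            ring
          rw [Finset.sum_congr rfl this, ← Finset.mul_sum, h2 i, mul_zero]
        have e2 : ∀ j ∈ t, w j * (if ((i:ℕ) = (j:ℕ) % n) then (-1:ℝ) else 1)
            = w j - 2 * (if ((i:ℕ) = (j:ℕ) % n) then w j else 0) := by
          intro j _
          split_ifs <;> ring
        rw [Finset.sum_congr rfl e2, Finset.sum_sub_distrib, hw0] at e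
        have e3 : (2:ℝ) * ∑ j ∈ t, (if ((i:ℕ) = (j:ℕ) % n) then w j else 0) = 0 := by
          rw [Finset.mul_sum]
          linarith [e]
        linarith [e3]
      -- the "α" equations
      have E : ∀ m : ℕ, m < n → ∑ j ∈ t, w j * sg n j * ep ((j:ℕ)%n) m = 0 := by
        intro m hm
        have hA : ∀ j ∈ t, w j * A γ j ⟨m, hm⟩
            = g γ m * (w j * sg n j * ep ((j:ℕ)%n) m) := by
          intro j _
          show w j * (sg n j * (g γ m * ep ((j:ℕ)%n) m)) = _
          ring
        have e : g γ m * ∑ j ∈ t, w j * sg n j * ep ((j:ℕ)%n) m = 0 := by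
          rw [Finset.mul_sum, ← Finset.sum_congr rfl hA, h1 ⟨m, hm⟩]
        have hg : g γ m ≠ 0 := by
          rcases g_pm γ hγ m with h | h <;> rw [h] <;> norm_num
        exact (mul_eq_zero.mp e).resolve_left hg
      -- the minus-sum at k₀
      have Sminus : ∑ j ∈ t, (if ((j:ℕ) % n = k₀) then w j * sg n j else 0) = 0 := by
        by_cases hc : k₀ + 1 < n
        · have e1 := E k₀ (by omega)
          have e2 := E (k₀ + 1) hc
          have e3 : ∑ j ∈ t, (w j * sg n j * ep ((j:ℕ)%n) k₀
              - w j * sg n j * ep ((j:ℕ)%n) (k₀+1)) = 0 := by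
            rw [Finset.sum_sub_distrib, e1, e2, sub_zero]
          have e4 : ∀ j ∈ t, w j * sg n j * ep ((j:ℕ)%n) k₀
              - w j * sg n j * ep ((j:ℕ)%n) (k₀+1)
              = 2 * (if ((j:ℕ) % n = k₀) then w j * sg n j else 0) := by
            intro j _
            rw [show w j * sg n j * ep ((j:ℕ)%n) k₀ - w j * sg n j * ep ((j:ℕ)%n) (k₀+1)
              = w j * sg n j * (ep ((j:ℕ)%n) k₀ - ep ((j:ℕ)%n) (k₀+1)) from by ring,
              ep_sub]
            split_ifs <;> ring
          rw [Finset.sum_congr rfl e4, ← Finset.mul_sum] at e3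
          have := mul_eq_zero.mp e3
          rcases this with h | h
          · norm_num at h
          · exact h
        · have hk₀' : k₀ = n - 1 := by omega
          have e1 := E k₀ (by omega)
          have e2 := E 0 (by omega)
          have e3 : ∑ j ∈ t, (w j * sg n j * ep ((j:ℕ)%n) k₀
              + w j * sg n j * ep ((j:ℕ)%n) 0) = 0 := by
            rw [Finset.sum_add_distrib, e1, e2, add_zero]
          have e4 : ∀ j ∈ t, w j * sg n j * ep ((j:ℕ)%n) k₀
              + w j * sg n j * ep ((j:ℕ)%n) 0
              = 2 * (if ((j:ℕ) % n = k₀) then w j * sg n j else 0) := by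
            intro j _
            have hjk : (j:ℕ) % n ≤ k₀ := by
              have : (j:ℕ) % n < n := Nat.mod_lt _ (by omega)
              omega
            rw [show w j * sg n j * ep ((j:ℕ)%n) k₀ + w j * sg n j * ep ((j:ℕ)%n) 0
              = w j * sg n j * (ep ((j:ℕ)%n) k₀ + ep ((j:ℕ)%n) 0) from by ring,
              ep_wrap _ _ hjk]
            split_ifs <;> ring
          rw [Finset.sum_congr rfl e4, ← Finset.mul_sum] at e3
          rcases mul_eq_zero.mp e3 with h | h
          · norm_num at h
          · exact h
      -- combine
      have key : ∀ j ∈ t,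
          (if (((j₀:ℕ) % n : ℕ) = (j:ℕ) % n) then w j else 0)
            + sg n j₀ * (if ((j:ℕ) % n = k₀) then w j * sg n j else 0)
          = if j = j₀ then 2 * w j₀ else 0 := by
        intro j _
        by_cases hj : j = j₀
        · subst hj
          rw [if_pos rfl, if_pos rfl, if_pos rfl]
          have h := sg_sq (n := n) j
          calc w j + sg n j * (w j * sg n j) = w j + w j * (sg n j * sg n j) := by ring
            _ = 2 * w j := by rw [h]; ring
        · rw [if_neg hj]
          by_cases hm : (j:ℕ) % n = k₀
          · rw [if_pos hm, if_pos (by rw [hm, hk₀def] : ((j₀:ℕ) % n : ℕ) = (j:ℕ) % n)]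
            have hopp := sg_opp j j₀ hj (by rw [hm, hk₀def])
            rw [hopp]
            have h := sg_sq (n := n) j₀
            calc w j + sg n j₀ * (w j * -sg n j₀)
                = w j - w j * (sg n j₀ * sg n j₀) := by ring
              _ = 0 := by rw [h]; ring
          · rw [if_neg (fun h => hm (by rw [hk₀def, ← h])), if_neg hm, mul_zero, add_zero]
      have hfin : ∑ j ∈ t, (if j = j₀ then 2 * w j₀ else 0) = 2 * w j₀ := by
        rw [Finset.sum_ite_eq' t j₀ (fun _ => 2 * w j₀), if_pos hj₀]
      have hsum0 : ∑ j ∈ t,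
          ((if (((j₀:ℕ) % n : ℕ) = (j:ℕ) % n) then w j else 0)
            + sg n j₀ * (if ((j:ℕ) % n = k₀) then w j * sg n j else 0)) = 0 := by
        rw [Finset.sum_add_distrib, ← Finset.mul_sum, Sminus, mul_zero, add_zero]
        have hi : ((((j₀:ℕ) % n : ℕ)) : ℕ) < n := hk₀
        have := Splus ⟨(j₀:ℕ) % n, hk₀⟩
        simpa using this
      rw [Finset.sum_congr rfl key, hfin] at hsum0
      linarith
    · -- saturation
      intro j
      have hk : (j:ℕ) % n < n := Nat.mod_lt _ (by omega)
      have e1 : ∀ i : Fin n, γ i * (A γ j i * A γ j (i+1))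
          = 1 - (if i = (⟨(j:ℕ) % n, hk⟩ : Fin n) then 2 else 0) := by
        intro i
        rw [term_eq γ hγ hodd hn j i]
        have : ((i:ℕ) = (j:ℕ) % n) ↔ i = (⟨(j:ℕ) % n, hk⟩ : Fin n) := by
          rw [Fin.ext_iff]
        split_ifs with h1 h2 h2 <;> first | (exfalso; rw [this] at h1; tauto) | norm_num
      rw [Finset.sum_congr rfl (fun i _ => e1 i), Finset.sum_sub_distrib,
        Finset.sum_const, Finset.sum_ite_eq' Finset.univ _ (fun _ => (2:ℝ)),
        if_pos (Finset.mem_univ _), Finset.card_univ, Fintype.card_fin,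
        nsmul_eq_mul, mul_one]
end

section
/- (Vertices of the no-disturbance polytope of the n-cycle.) Fix n ≥ 3. The extreme points of the no-disturbance polytope P = {(a,b) ∈ ℝ^n × ℝ^n : 1 + s·a_i + t·a_{i+1} + s·t·b_i ≥ 0 for all i (indices modulo n) and all s, t ∈ {−1,1}} are exactly the 2^n noncontextual deterministic points v(α) = (α, β(α)) with α ∈ {−1,1}^n and β(α)_i = α_i·α_{i+1}, together with the 2^{n−1} contextual points (0, γ) with γ ∈ {−1,1}^n having an odd number of entries equal to −1. -/
open Finset

namespace Stmt18Aux

open scoped Fin.NatCast Fin.IntCast Fin.CommRing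

variable {n : ℕ} [NeZero n]

def ND (n : ℕ) [NeZero n] : Set ((Fin n → ℝ) × (Fin n → ℝ)) :=
  {ab | ∀ i : Fin n, ∀ s t : ℝ, (s = -1 ∨ s = 1) → (t = -1 ∨ t = 1) →
      0 ≤ 1 + s * ab.1 i + t * ab.1 (i + 1) + s * t * ab.2 i}

lemma mem_ND {a b : Fin n → ℝ} :
    (a, b) ∈ ND n ↔ ∀ i : Fin n,
      0 ≤ 1 + a i + a (i+1) + b i ∧ 0 ≤ 1 + a i - a (i+1) - b i ∧
      0 ≤ 1 - a i + a (i+1) - b i ∧ 0 ≤ 1 - a i - a (i+1) + b i := by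
  constructor
  · intro h i
    have h1 := h i 1 1 (Or.inr rfl) (Or.inr rfl)
    have h2 := h i 1 (-1) (Or.inr rfl) (Or.inl rfl)
    have h3 := h i (-1) 1 (Or.inl rfl) (Or.inr rfl)
    have h4 := h i (-1) (-1) (Or.inl rfl) (Or.inl rfl)
    refine ⟨by linarith, by linarith, by linarith, by linarith⟩
  · intro h i s t hs ht
    obtain ⟨h1, h2, h3, h4⟩ := h i
    rcases hs with rfl | rfl <;> rcases ht with rfl | rfl <;> linarith

lemma bounds {a b : Fin n → ℝ}
    (H : ∀ i : Fin n,
      0 ≤ 1 + a i + a (i+1) + b i ∧ 0 ≤ 1 + a i - a (i+1) - b i ∧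
      0 ≤ 1 - a i + a (i+1) - b i ∧ 0 ≤ 1 - a i - a (i+1) + b i) (i : Fin n) :
    |a i| ≤ 1 ∧ |b i| ≤ 1 := by
  obtain ⟨h1, h2, h3, h4⟩ := H i
  constructor <;> rw [abs_le] <;> constructor <;> linarith

lemma pm_of_abs {x : ℝ} (h : |x| = 1) : x = -1 ∨ x = 1 := by
  rcases (abs_eq (by norm_num : (0:ℝ) ≤ 1)).1 h with h | h
  · exact Or.inr h
  · exact Or.inl h

lemma forced_b {a b : Fin n → ℝ}
    (H : ∀ i : Fin n,
      0 ≤ 1 + a i + a (i+1) + b i ∧ 0 ≤ 1 + a i - a (i+1) - b i ∧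
      0 ≤ 1 - a i + a (i+1) - b i ∧ 0 ≤ 1 - a i - a (i+1) + b i) (i : Fin n)
    (h : a i = -1 ∨ a i = 1) : b i = a i * a (i+1) := by
  obtain ⟨h1, h2, h3, h4⟩ := H i
  rcases h with h | h <;> rw [h] at h1 h2 h3 h4 ⊢ <;> linarith

lemma comb_eq {u v x y e : ℝ} (hu : 0 < u) (hv : 0 < v) (huv : u + v = 1)
    (hx : |x| ≤ 1) (hy : |y| ≤ 1) (he : e = -1 ∨ e = 1) (hc : u * x + v * y = e) :
    x = e ∧ y = e := by
  rw [abs_le] at hx hy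
  rcases he with rfl | rfl
  · have k1 : v * (-1) ≤ v * y := by nlinarith [hy.1]
    have k2 : u * (-1) ≤ u * x := by nlinarith [hx.1]
    have e1 : u * x = u * (-1) := by linarith
    have e2 : v * y = v * (-1) := by linarith
    exact ⟨mul_left_cancel₀ hu.ne' e1, mul_left_cancel₀ hv.ne' e2⟩
  · have k1 : v * y ≤ v * 1 := by nlinarith [hy.2]
    have k2 : u * x ≤ u * 1 := by nlinarith [hx.2]
    have e1 : u * x = u * 1 := by linarith
    have e2 : v * y = v * 1 := by linarith
    exact ⟨mul_left_cancel₀ hu.ne' e1, mul_left_cancel₀ hv.ne' e2⟩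

end Stmt18Aux

namespace Stmt18Aux

open scoped Fin.NatCast Fin.IntCast Fin.CommRing

variable {n : ℕ} [NeZero n]

lemma val_one_of (hn : 2 ≤ n) : ((1 : Fin n)).val = 1 := by
  have : ((1 : ℕ) : Fin n).val = 1 % n := Fin.val_natCast 1 n
  simpa [Nat.mod_eq_of_lt (by omega : 1 < n)] using this

lemma add_one_ne_zero_val (hn : 2 ≤ n) {x : Fin n} (h : x ≠ -1) :
    (x + 1).val = x.val + 1 := by
  have h1 : ((1 : Fin n)).val = 1 := val_one_of hn
  have hlt : x.val + 1 < n := by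
    rcases Nat.lt_or_ge (x.val + 1) n with hl | hg
    · exact hl
    · exfalso
      have hxn : x.val + 1 = n := by have := x.isLt; omega
      have hz : x + 1 = 0 := by
        apply Fin.ext
        have hv : (x + 1).val = (x.val + ((1 : Fin n)).val) % n := by rw [Fin.add_def]
        rw [hv, h1, hxn, Nat.mod_self]
        simp
      exact h (eq_neg_of_add_eq_zero_left hz)
  have hv : (x + 1).val = (x.val + ((1 : Fin n)).val) % n := by rw [Fin.add_def]
  rw [hv, h1, Nat.mod_eq_of_lt hlt]

lemma neg_one_val (hn : 2 ≤ n) : ((-1 : Fin n)).val = n - 1 := by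
  have h1 : ((1 : Fin n)).val = 1 := val_one_of hn
  have hz : (⟨n - 1, by omega⟩ : Fin n) + 1 = 0 := by
    apply Fin.ext
    have hv : ((⟨n - 1, by omega⟩ : Fin n) + 1).val
        = ((n - 1) + ((1 : Fin n)).val) % n := by rw [Fin.add_def]
    rw [hv, h1, Nat.sub_add_cancel (by omega : 1 ≤ n), Nat.mod_self]
    simp
  have := eq_neg_of_add_eq_zero_left hz
  rw [← this]

def chain (c : Fin n) (τ : Fin n → ℝ) : Fin n → ℝ :=
  fun i => ∏ j ∈ Finset.range (i - c - 1 : Fin n).val, τ (c + 1 + (j : Fin n))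

lemma chain_start (c : Fin n) (τ : Fin n → ℝ) : chain c τ (c + 1) = 1 := by
  rw [chain, show (c + 1 - c - 1 : Fin n) = 0 from by ring]
  simp

lemma chain_succ (hn : 2 ≤ n) (c : Fin n) (τ : Fin n → ℝ) {i : Fin n} (h : i ≠ c) :
    chain c τ (i + 1) = τ i * chain c τ i := by
  have hx : i - c - 1 ≠ -1 := by
    intro he
    apply h
    have h2 : i = (i - c - 1) + c + 1 := by ring
    rw [he] at h2; rw [h2]; ring
  have h2 : (i + 1 - c - 1 : Fin n) = (i - c - 1) + 1 := by ring
  rw [chain, chain, h2, add_one_ne_zero_val hn hx, prod_range_succ]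
  have h3 : c + 1 + (((i - c - 1 : Fin n)).val : Fin n) = i := by
    rw [Fin.cast_val_eq_self]; ring
  rw [h3, mul_comm]

lemma chain_abs (c : Fin n) (τ : Fin n → ℝ) (hτ : ∀ i, |τ i| ≤ 1) (i : Fin n) :
    |chain c τ i| ≤ 1 := by
  rw [chain, Finset.abs_prod]
  apply Finset.prod_le_one
  · intro j _; exact abs_nonneg _
  · intro j _; exact hτ _

lemma chain_wrap (hn : 2 ≤ n) (c : Fin n) (τ : Fin n → ℝ) :
    τ c * chain c τ c = ∏ i, τ i := by
  have h0 : (c - c - 1 : Fin n) = -1 := by ring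
  have h1 : (((n - 1 : ℕ)) : Fin n) = -1 := by
    rw [Nat.cast_sub (by omega : 1 ≤ n), Fin.natCast_self]
    push_cast
    ring
  have h2 : τ c = (fun j : ℕ => τ (c + 1 + (j : Fin n))) (n - 1) := by
    simp only []
    rw [h1]; congr 1; ring
  rw [chain, h0, neg_one_val hn, h2, mul_comm, ← prod_range_succ]
  rw [show n - 1 + 1 = n from by omega]
  rw [← Fin.prod_univ_eq_prod_range (fun j : ℕ => τ (c + 1 + (j : Fin n))) n]
  simp only [Fin.cast_val_eq_self]
  exact Equiv.prod_comp (Equiv.addLeft (c + 1)) τ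

lemma iterate_rec {a σ : Fin n → ℝ} (h : ∀ i, a (i + 1) = σ i * a i) (k : ℕ) :
    a ((k : ℕ) : Fin n) = (∏ j ∈ Finset.range k, σ ((j : ℕ) : Fin n)) * a 0 := by
  induction k with
  | zero => simp
  | succ k ih =>
      have hc : (((k + 1 : ℕ)) : Fin n) = ((k : ℕ) : Fin n) + 1 := by push_cast; ring
      rw [hc, h, ih, prod_range_succ]; ring

lemma all_zero {a σ : Fin n → ℝ} (h : ∀ i, a (i + 1) = σ i * a i)
    (hp : ∏ i, σ i = -1) : ∀ i, a i = 0 := by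
  have h0 : a 0 = 0 := by
    have hit := iterate_rec h n
    rw [Fin.natCast_self,
      ← Fin.prod_univ_eq_prod_range (fun j : ℕ => σ ((j : ℕ) : Fin n)) n] at hit
    simp only [Fin.cast_val_eq_self] at hit
    rw [hp] at hit
    linarith
  intro i
  have hit := iterate_rec h i.val
  rw [Fin.cast_val_eq_self] at hit
  rw [hit, h0, mul_zero]

lemma prod_pm {g : Fin n → ℝ} (hg : ∀ i, g i = -1 ∨ g i = 1) :
    ∏ i, g i = (-1) ^ (Finset.univ.filter (fun i => g i = -1)).card := by
  classical
  rw [← Finset.prod_filter_mul_prod_filter_not Finset.univ (fun i => g i = -1) g]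
  have h1 : ∏ i ∈ Finset.univ.filter (fun i => g i = -1), g i
      = (-1 : ℝ) ^ (Finset.univ.filter (fun i => g i = -1)).card := by
    rw [Finset.prod_congr rfl (fun i hi => (Finset.mem_filter.1 hi).2), Finset.prod_const]
  have h2 : ∏ i ∈ Finset.univ.filter (fun i => ¬ g i = -1), g i = 1 :=
    Finset.prod_eq_one fun i hi => (hg i).resolve_left (Finset.mem_filter.1 hi).2
  rw [h1, h2, mul_one]

lemma odd_iff_prod {g : Fin n → ℝ} (hg : ∀ i, g i = -1 ∨ g i = 1) :
    Odd (Finset.univ.filter (fun i => g i = -1)).card ↔ ∏ i, g i = -1 := by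
  rw [prod_pm hg]
  constructor
  · exact fun h => h.neg_one_pow
  · intro h
    rcases Nat.even_or_odd (Finset.univ.filter (fun i => g i = -1)).card with he | ho
    · rw [he.neg_one_pow] at h; norm_num at h
    · exact ho

lemma prod_pm_cases {g : Fin n → ℝ} (hg : ∀ i, g i = -1 ∨ g i = 1) :
    ∏ i, g i = -1 ∨ ∏ i, g i = 1 := by
  rw [prod_pm hg]
  rcases Nat.even_or_odd (Finset.univ.filter (fun i => g i = -1)).card with he | ho
  · exact Or.inr he.neg_one_pow
  · exact Or.inl ho.neg_one_pow

lemma cycle_boundary {S : Set (Fin n)} (h1 : ∃ j, j ∈ S) (h2 : ∃ m, m ∉ S) :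
    ∃ k, k ∉ S ∧ k + 1 ∈ S := by
  by_contra hcon
  push_neg at hcon
  obtain ⟨m, hm⟩ := h2
  have key : ∀ t : ℕ, m + ((t : ℕ) : Fin n) ∉ S := by
    intro t
    induction t with
    | zero => simpa using hm
    | succ t ih =>
        have h3 := hcon _ ih
        have he : m + (((t + 1 : ℕ)) : Fin n) = m + ((t : ℕ) : Fin n) + 1 := by
          push_cast; ring
        rw [he]; exact h3
  obtain ⟨j, hj⟩ := h1
  have he : j = m + (((j - m : Fin n)).val : Fin n) := by
    rw [Fin.cast_val_eq_self]; ring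
  exact key (j - m).val (he ▸ hj)

end Stmt18Aux

namespace Stmt18Aux

open scoped Fin.NatCast Fin.IntCast Fin.CommRing

variable {n : ℕ} [NeZero n]

lemma abs_mul_le {θ w M c : ℝ} (hθ : |θ| ≤ M) (hw : |w| ≤ c) :
    -(M * c) ≤ θ * w ∧ θ * w ≤ M * c := by
  have h := abs_le.1 (by
    calc |θ * w| = |θ| * |w| := abs_mul _ _
    _ ≤ M * c := mul_le_mul hθ hw (abs_nonneg _) ((abs_nonneg θ).trans hθ))
  exact h

lemma pert {a b δ ε : Fin n → ℝ}
    (hext : (a, b) ∈ Set.extremePoints ℝ (ND n))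
    (hδ : ∀ i, |δ i| ≤ 1) (hε : ∀ i, |ε i| ≤ 2)
    (hA : ∀ i, 1 + a i + a (i+1) + b i = 0 → δ i + δ (i+1) + ε i = 0)
    (hB : ∀ i, 1 + a i - a (i+1) - b i = 0 → δ i - δ (i+1) - ε i = 0)
    (hC : ∀ i, 1 - a i + a (i+1) - b i = 0 → -δ i + δ (i+1) - ε i = 0)
    (hD : ∀ i, 1 - a i - a (i+1) + b i = 0 → -δ i - δ (i+1) + ε i = 0) :
    ∀ i, δ i = 0 ∧ ε i = 0 := by
  classical
  obtain ⟨hmem, hex⟩ := mem_extremePoints.1 hext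
  have H := mem_ND.1 hmem
  set f : Fin n → ℝ := fun i =>
    min (min (if 1 + a i + a (i+1) + b i = 0 then 1 else 1 + a i + a (i+1) + b i)
             (if 1 + a i - a (i+1) - b i = 0 then 1 else 1 + a i - a (i+1) - b i))
        (min (if 1 - a i + a (i+1) - b i = 0 then 1 else 1 - a i + a (i+1) - b i)
             (if 1 - a i - a (i+1) + b i = 0 then 1 else 1 - a i - a (i+1) + b i)) with hf
  have hne : (Finset.univ : Finset (Fin n)).Nonempty := Finset.univ_nonempty
  set m := Finset.inf' Finset.univ hne f with hm
  have hmpos : 0 < m := by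
    rw [hm, Finset.lt_inf'_iff]
    intro i _
    obtain ⟨h1, h2, h3, h4⟩ := H i
    rw [hf]
    refine lt_min (lt_min ?_ ?_) (lt_min ?_ ?_) <;> split_ifs with h <;>
      first
      | exact lt_of_le_of_ne h1 (Ne.symm h)
      | exact lt_of_le_of_ne h2 (Ne.symm h)
      | exact lt_of_le_of_ne h3 (Ne.symm h)
      | exact lt_of_le_of_ne h4 (Ne.symm h)
      | norm_num
  have key : ∀ θ : ℝ, |θ| ≤ m / 5 →
      ((fun i => a i + θ * δ i), (fun i => b i + θ * ε i)) ∈ ND n := by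
    intro θ hθ
    rw [mem_ND]
    intro i
    obtain ⟨h1, h2, h3, h4⟩ := H i
    have hmf : m ≤ f i := Finset.inf'_le f (Finset.mem_univ i)
    rw [hf] at hmf
    simp only [] at hmf
    have t1 := abs_mul_le hθ (hδ i)
    have t2 := abs_mul_le hθ (hδ (i+1))
    have t3 := abs_mul_le hθ (hε i)
    have hθpos : 0 ≤ m / 5 := (abs_nonneg θ).trans hθ
    refine ⟨?_, ?_, ?_, ?_⟩
    · by_cases h0 : 1 + a i + a (i+1) + b i = 0
      · have hl := hA i h0
        have he : 1 + (a i + θ * δ i) + (a (i+1) + θ * δ (i+1)) + (b i + θ * ε i)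
            = (1 + a i + a (i+1) + b i) + θ * (δ i + δ (i+1) + ε i) := by ring
        rw [he, h0, hl]; norm_num
      · have h5 : m ≤ 1 + a i + a (i+1) + b i := by
          have := le_trans (le_trans hmf (min_le_left _ _)) (min_le_left _ _)
          rwa [if_neg h0] at this
        nlinarith [t1.1, t2.1, t3.1]
    · by_cases h0 : 1 + a i - a (i+1) - b i = 0
      · have hl := hB i h0
        have he : 1 + (a i + θ * δ i) - (a (i+1) + θ * δ (i+1)) - (b i + θ * ε i)
            = (1 + a i - a (i+1) - b i) + θ * (δ i - δ (i+1) - ε i) := by ring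
        rw [he, h0, hl]; norm_num
      · have h5 : m ≤ 1 + a i - a (i+1) - b i := by
          have := le_trans (le_trans hmf (min_le_left _ _)) (min_le_right _ _)
          rwa [if_neg h0] at this
        nlinarith [t1.1, t2.2, t3.2]
    · by_cases h0 : 1 - a i + a (i+1) - b i = 0
      · have hl := hC i h0
        have he : 1 - (a i + θ * δ i) + (a (i+1) + θ * δ (i+1)) - (b i + θ * ε i)
            = (1 - a i + a (i+1) - b i) + θ * (-δ i + δ (i+1) - ε i) := by ring
        rw [he, h0, hl]; norm_num
      · have h5 : m ≤ 1 - a i + a (i+1) - b i := by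
          have := le_trans (le_trans hmf (min_le_right _ _)) (min_le_left _ _)
          rwa [if_neg h0] at this
        nlinarith [t1.2, t2.1, t3.2]
    · by_cases h0 : 1 - a i - a (i+1) + b i = 0
      · have hl := hD i h0
        have he : 1 - (a i + θ * δ i) - (a (i+1) + θ * δ (i+1)) + (b i + θ * ε i)
            = (1 - a i - a (i+1) + b i) + θ * (-δ i - δ (i+1) + ε i) := by ring
        rw [he, h0, hl]; norm_num
      · have h5 : m ≤ 1 - a i - a (i+1) + b i := by
          have := le_trans (le_trans hmf (min_le_right _ _)) (min_le_right _ _)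
          rwa [if_neg h0] at this
        nlinarith [t1.2, t2.2, t3.1]
  have hp1 := key (m / 5) (by rw [abs_of_pos (by positivity)])
  have hp2 := key (-(m / 5)) (by rw [abs_neg, abs_of_pos (by positivity)])
  have hseg : (a, b) ∈ openSegment ℝ
      ((fun i => a i + (m / 5) * δ i), (fun i => b i + (m / 5) * ε i))
      ((fun i => a i + (-(m / 5)) * δ i), (fun i => b i + (-(m / 5)) * ε i)) := by
    refine ⟨1/2, 1/2, by norm_num, by norm_num, by norm_num, ?_⟩
    refine Prod.ext ?_ ?_ <;> funext i <;>
      simp only [Prod.fst_add, Prod.snd_add, Prod.smul_fst, Prod.smul_snd,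
        Pi.add_apply, Pi.smul_apply, smul_eq_mul] <;> ring
  obtain ⟨he1, _⟩ := hex _ hp1 _ hp2 hseg
  intro i
  have ha := congrFun (congrArg Prod.fst he1) i
  have hb := congrFun (congrArg Prod.snd he1) i
  simp only [] at ha hb
  constructor
  · have : (m / 5) * δ i = 0 := by linarith
    rcases mul_eq_zero.1 this with h | h
    · exfalso; have : (0:ℝ) < m / 5 := by positivity
      rw [h] at this; exact lt_irrefl _ this
    · exact h
  · have : (m / 5) * ε i = 0 := by linarith
    rcases mul_eq_zero.1 this with h | h
    · exfalso; have : (0:ℝ) < m / 5 := by positivity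
      rw [h] at this; exact lt_irrefl _ this
    · exact h

end Stmt18Aux

namespace Stmt18Aux

open scoped Fin.NatCast Fin.IntCast Fin.CommRing

variable {n : ℕ} [NeZero n]

lemma seg_components {x₁ x₂ : (Fin n → ℝ) × (Fin n → ℝ)} {p : (Fin n → ℝ) × (Fin n → ℝ)}
    (hseg : p ∈ openSegment ℝ x₁ x₂) :
    ∃ u v : ℝ, 0 < u ∧ 0 < v ∧ u + v = 1 ∧
      (∀ i, u * x₁.1 i + v * x₂.1 i = p.1 i) ∧ (∀ i, u * x₁.2 i + v * x₂.2 i = p.2 i) := by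
  obtain ⟨u, v, hu, hv, huv, heq⟩ := hseg
  refine ⟨u, v, hu, hv, huv, ?_, ?_⟩ <;> intro i
  · have := congrFun (congrArg Prod.fst heq) i
    simpa using this
  · have := congrFun (congrArg Prod.snd heq) i
    simpa using this

lemma det_mem {α : Fin n → ℝ} (hα : ∀ i, α i = -1 ∨ α i = 1) :
    (α, fun i => α i * α (i + 1)) ∈ ND n := by
  intro i s t hs ht
  rcases hs with rfl | rfl <;> rcases ht with rfl | rfl <;>
    rcases hα i with h | h <;> rcases hα (i+1) with h' | h' <;>
    simp only [h, h'] <;> norm_num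

lemma det_extreme {α : Fin n → ℝ} (hα : ∀ i, α i = -1 ∨ α i = 1) :
    (α, fun i => α i * α (i + 1)) ∈ Set.extremePoints ℝ (ND n) := by
  refine mem_extremePoints.2 ⟨det_mem hα, ?_⟩
  rintro ⟨c, d⟩ hcd ⟨c', d'⟩ hcd' hseg
  obtain ⟨u, v, hu, hv, huv, hfst, hsnd⟩ := seg_components hseg
  have H := mem_ND.1 hcd
  have H' := mem_ND.1 hcd'
  have ha : ∀ i, c i = α i ∧ c' i = α i := fun i =>
    comb_eq hu hv huv (bounds H i).1 (bounds H' i).1 (hα i) (hfst i)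
  have hbb : ∀ (e : Fin n → ℝ),
      (∀ i : Fin n, 0 ≤ 1 + e i + e (i+1) + (fun j => e j) i ∧ True) → True := fun _ _ => trivial
  constructor
  · refine Prod.ext ?_ ?_
    · funext i; exact (ha i).1
    · funext i
      show d i = α i * α (i + 1)
      have := forced_b H i (by rw [(ha i).1]; exact hα i)
      rw [this, (ha i).1, (ha (i+1)).1]
  · refine Prod.ext ?_ ?_
    · funext i; exact (ha i).2
    · funext i
      show d' i = α i * α (i + 1)
      have := forced_b H' i (by rw [(ha i).2]; exact hα i)
      rw [this, (ha i).2, (ha (i+1)).2]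

lemma ctx_mem {g : Fin n → ℝ} (hg : ∀ i, g i = -1 ∨ g i = 1) :
    ((0, g) : (Fin n → ℝ) × (Fin n → ℝ)) ∈ ND n := by
  intro i s t hs ht
  rcases hs with rfl | rfl <;> rcases ht with rfl | rfl <;>
    rcases hg i with h | h <;>
    simp only [Pi.zero_apply, h] <;> norm_num

lemma ctx_forced_zero {c d g : Fin n → ℝ} (hg : ∀ i, g i = -1 ∨ g i = 1)
    (hodd : Odd (Finset.univ.filter (fun i => g i = -1)).card)
    (hmem : (c, d) ∈ ND n) (hd : ∀ i, d i = g i) : ∀ i, c i = 0 := by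
  have H := mem_ND.1 hmem
  have hrec : ∀ i, c (i + 1) = g i * c i := by
    intro i
    obtain ⟨h1, h2, h3, h4⟩ := H i
    rw [hd i] at h1 h2 h3 h4
    rcases hg i with h | h <;> rw [h] at h1 h2 h3 h4 ⊢ <;> linarith
  exact all_zero hrec ((odd_iff_prod hg).1 hodd)

lemma ctx_extreme {g : Fin n → ℝ} (hg : ∀ i, g i = -1 ∨ g i = 1)
    (hodd : Odd (Finset.univ.filter (fun i => g i = -1)).card) :
    ((0, g) : (Fin n → ℝ) × (Fin n → ℝ)) ∈ Set.extremePoints ℝ (ND n) := by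
  refine mem_extremePoints.2 ⟨ctx_mem hg, ?_⟩
  rintro ⟨c, d⟩ hcd ⟨c', d'⟩ hcd' hseg
  obtain ⟨u, v, hu, hv, huv, hfst, hsnd⟩ := seg_components hseg
  have H := mem_ND.1 hcd
  have H' := mem_ND.1 hcd'
  have hb : ∀ i, d i = g i ∧ d' i = g i := fun i =>
    comb_eq hu hv huv (bounds H i).2 (bounds H' i).2 (hg i) (hsnd i)
  have hz := ctx_forced_zero hg hodd hcd (fun i => (hb i).1)
  have hz' := ctx_forced_zero hg hodd hcd' (fun i => (hb i).2)
  constructor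
  · exact Prod.ext (funext fun i => hz i) (funext fun i => (hb i).1)
  · exact Prod.ext (funext fun i => hz' i) (funext fun i => (hb i).2)

end Stmt18Aux

namespace Stmt18Aux

open scoped Fin.NatCast Fin.IntCast Fin.CommRing

variable {n : ℕ} [NeZero n]

lemma not_mixed (hn : 3 ≤ n) {a b : Fin n → ℝ}
    (hext : (a, b) ∈ Set.extremePoints ℝ (ND n))
    {c : Fin n} (hc1 : |a c| = 1) (hc2 : |a (c+1)| < 1) : False := by
  classical
  have H := mem_ND.1 (mem_extremePoints.1 hext).1
  have habs := fun i => bounds H i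
  set τ : Fin n → ℝ := fun i =>
    if |a i| = 1 ∨ |a (i+1)| = 1 then 0
    else if (1 + a i - a (i+1) - b i = 0 ∨ 1 - a i + a (i+1) - b i = 0) then 1 else -1 with hτ
  set δ := chain c τ with hδdef
  have hτabs : ∀ i, |τ i| ≤ 1 := by
    intro i; rw [hτ]; dsimp only; split_ifs <;> norm_num
  have hδabs : ∀ i, |δ i| ≤ 1 := chain_abs c τ hτabs
  have hstep : ∀ i, i ≠ c → δ (i+1) = τ i * δ i := fun i hi => chain_succ (by omega) c τ hi
  have hm1 : ∀ i, |a i| = 1 → δ i = 0 := by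
    intro i h
    have hne : i ≠ c + 1 := by
      intro he; rw [he] at h; rw [h] at hc2; exact lt_irrefl _ hc2
    have hne2 : i - 1 ≠ c := by
      intro he; apply hne; rw [← he]; ring
    have e0 : (i - 1) + 1 = i := by ring
    have e1 : δ i = τ (i-1) * δ (i-1) := by
      conv_lhs => rw [← e0]
      exact hstep _ hne2
    have e2 : τ (i - 1) = 0 := by
      rw [hτ]; dsimp only
      rw [if_pos (Or.inr (by rw [e0]; exact h))]
    rw [e1, e2, zero_mul]
  set ε : Fin n → ℝ := fun i =>
    if |a i| = 1 then a i * δ (i+1)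
    else if |a (i+1)| = 1 then a (i+1) * δ i else 0 with hε
  have hεabs : ∀ i, |ε i| ≤ 2 := by
    intro i; rw [hε]; dsimp only
    split_ifs with h1 h2
    · rw [abs_mul]
      have k1 := (habs i).1
      have k2 := hδabs (i+1)
      nlinarith [abs_nonneg (a i), abs_nonneg (δ (i+1))]
    · rw [abs_mul]
      have k1 := (habs (i+1)).1
      have k2 := hδabs i
      nlinarith [abs_nonneg (a (i+1)), abs_nonneg (δ i)]
    · norm_num
  have main : ∀ i, (1 + a i + a (i+1) + b i = 0 → δ i + δ (i+1) + ε i = 0) ∧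
      (1 + a i - a (i+1) - b i = 0 → δ i - δ (i+1) - ε i = 0) ∧
      (1 - a i + a (i+1) - b i = 0 → -δ i + δ (i+1) - ε i = 0) ∧
      (1 - a i - a (i+1) + b i = 0 → -δ i - δ (i+1) + ε i = 0) := by
    intro i
    have hy1 := abs_le.1 (habs (i+1)).1
    have hy0 := abs_le.1 (habs i).1
    have hz1 := abs_le.1 (habs i).2
    by_cases h1 : |a i| = 1 <;> by_cases h2 : |a (i+1)| = 1
    · have d1 : δ i = 0 := hm1 i h1
      have d2 : δ (i+1) = 0 := hm1 (i+1) h2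
      have e0 : ε i = 0 := by rw [hε]; dsimp only; rw [if_pos h1, d2, mul_zero]
      refine ⟨fun _ => ?_, fun _ => ?_, fun _ => ?_, fun _ => ?_⟩ <;> rw [d1, d2, e0] <;> ring
    · have d1 : δ i = 0 := hm1 i h1
      have e0 : ε i = a i * δ (i+1) := by rw [hε]; dsimp only; rw [if_pos h1]
      rcases pm_of_abs h1 with hx | hx
      · refine ⟨fun _ => ?_, fun _ => ?_, fun hc' => absurd ?_ h2, fun hd' => absurd ?_ h2⟩
        · rw [d1, e0, hx]; ring
        · rw [d1, e0, hx]; ring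
        · rw [hx] at hc'; have hv : a (i+1) = -1 := by linarith
          rw [hv]; norm_num
        · rw [hx] at hd'; have hv : a (i+1) = 1 := by linarith
          rw [hv]; norm_num
      · refine ⟨fun hA' => absurd ?_ h2, fun hB' => absurd ?_ h2, fun _ => ?_, fun _ => ?_⟩
        · rw [hx] at hA'; have hv : a (i+1) = -1 := by linarith
          rw [hv]; norm_num
        · rw [hx] at hB'; have hv : a (i+1) = 1 := by linarith
          rw [hv]; norm_num
        · rw [d1, e0, hx]; ring
        · rw [d1, e0, hx]; ring
    · have d2 : δ (i+1) = 0 := hm1 (i+1) h2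
      have e0 : ε i = a (i+1) * δ i := by rw [hε]; dsimp only; rw [if_neg h1, if_pos h2]
      rcases pm_of_abs h2 with hx | hx
      · refine ⟨fun _ => ?_, fun hB' => absurd ?_ h1, fun _ => ?_, fun hD' => absurd ?_ h1⟩
        · rw [d2, e0, hx]; ring
        · rw [hx] at hB'; have hv : a i = -1 := by linarith
          rw [hv]; norm_num
        · rw [d2, e0, hx]; ring
        · rw [hx] at hD'; have hv : a i = 1 := by linarith
          rw [hv]; norm_num
      · refine ⟨fun hA' => absurd ?_ h1, fun _ => ?_, fun hC' => absurd ?_ h1, fun _ => ?_⟩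
        · rw [hx] at hA'; have hv : a i = -1 := by linarith
          rw [hv]; norm_num
        · rw [d2, e0, hx]; ring
        · rw [hx] at hC'; have hv : a i = 1 := by linarith
          rw [hv]; norm_num
        · rw [d2, e0, hx]; ring
    · have hic : i ≠ c := by intro he; rw [he] at h1; exact h1 hc1
      have hds : δ (i+1) = τ i * δ i := hstep i hic
      have e0 : ε i = 0 := by rw [hε]; dsimp only; rw [if_neg h1, if_neg h2]
      have hlt1 := abs_lt.1 (lt_of_le_of_ne (habs i).1 h1)
      have hlt2 := abs_lt.1 (lt_of_le_of_ne (habs (i+1)).1 h2)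
      have hτi : τ i = if (1 + a i - a (i+1) - b i = 0 ∨ 1 - a i + a (i+1) - b i = 0)
          then 1 else -1 := by
        rw [hτ]; dsimp only; rw [if_neg (by push_neg; exact ⟨h1, h2⟩)]
      refine ⟨fun hA' => ?_, fun hB' => ?_, fun hC' => ?_, fun hD' => ?_⟩
      · have hBne : ¬ (1 + a i - a (i+1) - b i = 0) := fun h => by linarith [hlt1.1]
        have hCne : ¬ (1 - a i + a (i+1) - b i = 0) := fun h => by linarith [hlt2.1]
        have ht : τ i = -1 := by rw [hτi, if_neg (by push_neg; exact ⟨hBne, hCne⟩)]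
        rw [hds, ht, e0]; ring
      · have ht : τ i = 1 := by rw [hτi, if_pos (Or.inl hB')]
        rw [hds, ht, e0]; ring
      · have ht : τ i = 1 := by rw [hτi, if_pos (Or.inr hC')]
        rw [hds, ht, e0]; ring
      · have hBne : ¬ (1 + a i - a (i+1) - b i = 0) := fun h => by linarith [hlt2.2]
        have hCne : ¬ (1 - a i + a (i+1) - b i = 0) := fun h => by linarith [hlt1.2]
        have ht : τ i = -1 := by rw [hτi, if_neg (by push_neg; exact ⟨hBne, hCne⟩)]
        rw [hds, ht, e0]; ring
  have hz := pert hext hδabs hεabs (fun i => (main i).1) (fun i => (main i).2.1)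
    (fun i => (main i).2.2.1) (fun i => (main i).2.2.2)
  have h1 := (hz (c+1)).1
  rw [hδdef, chain_start] at h1
  norm_num at h1

end Stmt18Aux

namespace Stmt18Aux

open scoped Fin.NatCast Fin.IntCast Fin.CommRing

variable {n : ℕ} [NeZero n]

lemma allsmall_cut (hn : 3 ≤ n) {a b : Fin n → ℝ}
    (hext : (a, b) ∈ Set.extremePoints ℝ (ND n)) (hlt : ∀ i, |a i| < 1)
    {c : Fin n}
    (hcAD : ¬(1 + a c + a (c+1) + b c = 0 ∧ 1 - a c - a (c+1) + b c = 0))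
    (hcBC : ¬(1 + a c - a (c+1) - b c = 0 ∧ 1 - a c + a (c+1) - b c = 0)) : False := by
  classical
  set τ : Fin n → ℝ := fun i =>
    if (1 + a i - a (i+1) - b i = 0 ∨ 1 - a i + a (i+1) - b i = 0) then 1 else -1 with hτ
  set δ := chain c τ with hδdef
  have hτabs : ∀ i, |τ i| ≤ 1 := by
    intro i; rw [hτ]; dsimp only; split_ifs <;> norm_num
  have hδabs : ∀ i, |δ i| ≤ 1 := chain_abs c τ hτabs
  have hstep : ∀ i, i ≠ c → δ (i+1) = τ i * δ i := fun i hi => chain_succ (by omega) c τ hi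
  set ε : Fin n → ℝ := fun i =>
    if i = c then
      (if 1 + a c + a (c+1) + b c = 0 then -(δ c + δ (c+1))
       else if 1 + a c - a (c+1) - b c = 0 then δ c - δ (c+1)
       else if 1 - a c + a (c+1) - b c = 0 then δ (c+1) - δ c
       else if 1 - a c - a (c+1) + b c = 0 then δ c + δ (c+1)
       else 0)
    else 0 with hε
  have hεabs : ∀ i, |ε i| ≤ 2 := by
    intro i; rw [hε]; dsimp only
    have k1 := abs_le.1 (hδabs c)
    have k2 := abs_le.1 (hδabs (c+1))
    split_ifs <;> rw [abs_le] <;> constructor <;> linarith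
  have main : ∀ i, (1 + a i + a (i+1) + b i = 0 → δ i + δ (i+1) + ε i = 0) ∧
      (1 + a i - a (i+1) - b i = 0 → δ i - δ (i+1) - ε i = 0) ∧
      (1 - a i + a (i+1) - b i = 0 → -δ i + δ (i+1) - ε i = 0) ∧
      (1 - a i - a (i+1) + b i = 0 → -δ i - δ (i+1) + ε i = 0) := by
    intro i
    have hlt1 := abs_lt.1 (hlt i)
    have hlt2 := abs_lt.1 (hlt (i+1))
    by_cases hic : i = c
    · subst hic
      have eε : ε i = (if 1 + a i + a (i+1) + b i = 0 then -(δ i + δ (i+1))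
       else if 1 + a i - a (i+1) - b i = 0 then δ i - δ (i+1)
       else if 1 - a i + a (i+1) - b i = 0 then δ (i+1) - δ i
       else if 1 - a i - a (i+1) + b i = 0 then δ i + δ (i+1)
       else 0) := by rw [hε]; dsimp only; rw [if_pos rfl]
      refine ⟨fun hA' => ?_, fun hB' => ?_, fun hC' => ?_, fun hD' => ?_⟩
      · rw [eε, if_pos hA']; ring
      · have hAne : ¬ (1 + a i + a (i+1) + b i = 0) := fun h => by linarith [hlt1.1]
        rw [eε, if_neg hAne, if_pos hB']; ring
      · have hAne : ¬ (1 + a i + a (i+1) + b i = 0) := fun h => by linarith [hlt2.1]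
        have hBne : ¬ (1 + a i - a (i+1) - b i = 0) := fun h => hcBC ⟨h, hC'⟩
        rw [eε, if_neg hAne, if_neg hBne, if_pos hC']; ring
      · have hAne : ¬ (1 + a i + a (i+1) + b i = 0) := fun h => hcAD ⟨h, hD'⟩
        have hBne : ¬ (1 + a i - a (i+1) - b i = 0) := fun h => by linarith [hlt2.2]
        have hCne : ¬ (1 - a i + a (i+1) - b i = 0) := fun h => by linarith [hlt1.2]
        rw [eε, if_neg hAne, if_neg hBne, if_neg hCne, if_pos hD']; ring
    · have hds : δ (i+1) = τ i * δ i := hstep i hic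
      have e0 : ε i = 0 := by rw [hε]; dsimp only; rw [if_neg hic]
      have hτi : τ i = if (1 + a i - a (i+1) - b i = 0 ∨ 1 - a i + a (i+1) - b i = 0)
          then 1 else -1 := by rw [hτ]
      refine ⟨fun hA' => ?_, fun hB' => ?_, fun hC' => ?_, fun hD' => ?_⟩
      · have hBne : ¬ (1 + a i - a (i+1) - b i = 0) := fun h => by linarith [hlt1.1]
        have hCne : ¬ (1 - a i + a (i+1) - b i = 0) := fun h => by linarith [hlt2.1]
        have ht : τ i = -1 := by rw [hτi, if_neg (by push_neg; exact ⟨hBne, hCne⟩)]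
        rw [hds, ht, e0]; ring
      · have ht : τ i = 1 := by rw [hτi, if_pos (Or.inl hB')]
        rw [hds, ht, e0]; ring
      · have ht : τ i = 1 := by rw [hτi, if_pos (Or.inr hC')]
        rw [hds, ht, e0]; ring
      · have hBne : ¬ (1 + a i - a (i+1) - b i = 0) := fun h => by linarith [hlt2.2]
        have hCne : ¬ (1 - a i + a (i+1) - b i = 0) := fun h => by linarith [hlt1.2]
        have ht : τ i = -1 := by rw [hτi, if_neg (by push_neg; exact ⟨hBne, hCne⟩)]
        rw [hds, ht, e0]; ring
  have hz := pert hext hδabs hεabs (fun i => (main i).1) (fun i => (main i).2.1)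
    (fun i => (main i).2.2.1) (fun i => (main i).2.2.2)
  have h1 := (hz (c+1)).1
  rw [hδdef, chain_start] at h1
  norm_num at h1

lemma dt_cut (hn : 3 ≤ n) {a b : Fin n → ℝ}
    (hext : (a, b) ∈ Set.extremePoints ℝ (ND n)) (hlt : ∀ i, |a i| < 1)
    (hdt : ∀ i, (1 + a i + a (i+1) + b i = 0 ∧ 1 - a i - a (i+1) + b i = 0) ∨
      (1 + a i - a (i+1) - b i = 0 ∧ 1 - a i + a (i+1) - b i = 0))
    (hprod : ∏ i, b i = 1) : False := by
  classical
  have hbpm : ∀ i, |b i| ≤ 1 := by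
    intro i
    rcases hdt i with ⟨h1, h2⟩ | ⟨h1, h2⟩ <;> rw [abs_le] <;> constructor <;> linarith
  set δ := chain 0 b with hδdef
  have hδabs : ∀ i, |δ i| ≤ 1 := chain_abs 0 b hbpm
  have hstep : ∀ i, δ (i+1) = b i * δ i := by
    intro i
    by_cases hi : i = 0
    · subst hi
      rw [hδdef, chain_start]
      have := chain_wrap (by omega : 2 ≤ n) 0 b
      rw [hprod] at this
      exact this.symm
    · exact chain_succ (by omega) 0 b hi
  have main : ∀ i, (1 + a i + a (i+1) + b i = 0 → δ i + δ (i+1) + (0:ℝ) = 0) ∧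
      (1 + a i - a (i+1) - b i = 0 → δ i - δ (i+1) - (0:ℝ) = 0) ∧
      (1 - a i + a (i+1) - b i = 0 → -δ i + δ (i+1) - (0:ℝ) = 0) ∧
      (1 - a i - a (i+1) + b i = 0 → -δ i - δ (i+1) + (0:ℝ) = 0) := by
    intro i
    have hlt1 := abs_lt.1 (hlt i)
    have hlt2 := abs_lt.1 (hlt (i+1))
    rcases hdt i with ⟨hA0, hD0⟩ | ⟨hB0, hC0⟩
    · have hb : b i = -1 := by linarith
      refine ⟨fun _ => ?_, fun hB' => absurd hB' (fun h => by linarith [hlt1.1]),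
        fun hC' => absurd hC' (fun h => by linarith [hlt2.1]), fun _ => ?_⟩
      · rw [hstep, hb]; ring
      · rw [hstep, hb]; ring
    · have hb : b i = 1 := by linarith
      refine ⟨fun hA' => absurd hA' (fun h => by linarith [hlt1.1]), fun _ => ?_,
        fun _ => ?_, fun hD' => absurd hD' (fun h => by linarith [hlt2.2])⟩
      · rw [hstep, hb]; ring
      · rw [hstep, hb]; ring
  have hz := pert hext hδabs (fun i => by norm_num : ∀ i : Fin n, |(0:ℝ)| ≤ 2)
    (fun i => (main i).1) (fun i => (main i).2.1)
    (fun i => (main i).2.2.1) (fun i => (main i).2.2.2)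
  have h1 := (hz (0+1)).1
  rw [hδdef, chain_start] at h1
  norm_num at h1

end Stmt18Aux

namespace Stmt18Aux

open scoped Fin.NatCast Fin.IntCast Fin.CommRing

variable {n : ℕ} [NeZero n]

lemma forward (hn : 3 ≤ n) {a b : Fin n → ℝ}
    (hext : (a, b) ∈ Set.extremePoints ℝ (ND n)) :
    (∃ α : Fin n → ℝ, (∀ i, α i = -1 ∨ α i = 1) ∧
        (a, b) = (α, fun i => α i * α (i + 1))) ∨
    (∃ g : Fin n → ℝ, (∀ i, g i = -1 ∨ g i = 1) ∧
        Odd (Finset.univ.filter (fun i => g i = -1)).card ∧ (a, b) = (0, g)) := by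
  classical
  have H := mem_ND.1 (mem_extremePoints.1 hext).1
  have habs := fun i => bounds H i
  by_cases hall : ∀ i, a i = -1 ∨ a i = 1
  · left
    exact ⟨a, hall, Prod.ext_iff.2 ⟨rfl, funext fun i => forced_b H i (hall i)⟩⟩
  · push_neg at hall
    obtain ⟨j, hj1, hj2⟩ := hall
    have hjlt : |a j| < 1 := by
      rcases lt_or_eq_of_le (habs j).1 with h | h
      · exact h
      · rcases pm_of_abs h with h' | h' <;> [exact absurd h' hj1; exact absurd h' hj2]
    by_cases hsome : ∃ k, |a k| = 1
    · exfalso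
      obtain ⟨c, hc1, hc2⟩ := cycle_boundary (S := {i : Fin n | |a i| < 1})
        ⟨j, hjlt⟩ (by obtain ⟨k, hk⟩ := hsome; exact ⟨k, by simp [hk]⟩)
      have hc1' : |a c| = 1 := le_antisymm (habs c).1 (not_lt.1 hc1)
      exact not_mixed hn hext hc1' hc2
    · have hlt : ∀ i, |a i| < 1 := by
        intro i
        rcases lt_or_eq_of_le (habs i).1 with h | h
        · exact h
        · exact absurd ⟨i, h⟩ hsome
      by_cases hdt : ∀ i, (1 + a i + a (i+1) + b i = 0 ∧ 1 - a i - a (i+1) + b i = 0) ∨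
          (1 + a i - a (i+1) - b i = 0 ∧ 1 - a i + a (i+1) - b i = 0)
      · have hbpm : ∀ i, b i = -1 ∨ b i = 1 := by
          intro i
          rcases hdt i with ⟨h1, h2⟩ | ⟨h1, h2⟩
          · left; linarith
          · right; linarith
        have hrec : ∀ i, a (i + 1) = b i * a i := by
          intro i
          rcases hdt i with ⟨h1, h2⟩ | ⟨h1, h2⟩
          · have hb : b i = -1 := by linarith
            rw [hb]; linarith
          · have hb : b i = 1 := by linarith
            rw [hb]; linarith
        rcases prod_pm_cases hbpm with hp | hp
        · right
          refine ⟨b, hbpm, (odd_iff_prod hbpm).2 hp, ?_⟩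
          exact Prod.ext_iff.2 ⟨funext fun i => all_zero hrec hp i, rfl⟩
        · exact absurd (dt_cut hn hext hlt hdt hp) (fun h => h)
      · exfalso
        push_neg at hdt
        obtain ⟨c, hcAD, hcBC⟩ := hdt
        exact allsmall_cut hn hext hlt (fun h => hcAD h.1 h.2) (fun h => hcBC h.1 h.2)

end Stmt18Aux

theorem stmt_18 (n : ℕ) [NeZero n] (hn : 3 ≤ n) :
    Set.extremePoints ℝ
      {ab : (Fin n → ℝ) × (Fin n → ℝ) |
        ∀ i : Fin n, ∀ s t : ℝ, (s = -1 ∨ s = 1) → (t = -1 ∨ t = 1) →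
          0 ≤ 1 + s * ab.1 i + t * ab.1 (i + 1) + s * t * ab.2 i} =
    -- the 2^n noncontextual deterministic vertices…
    {p : (Fin n → ℝ) × (Fin n → ℝ) |
        ∃ α : Fin n → ℝ, (∀ i, α i = -1 ∨ α i = 1) ∧
          p = (α, fun i => α i * α (i + 1))} ∪
    -- …together with the 2^(n−1) contextual vertices
    {p : (Fin n → ℝ) × (Fin n → ℝ) |
        ∃ g : Fin n → ℝ, (∀ i, g i = -1 ∨ g i = 1) ∧
          Odd (Finset.univ.filter (fun i => g i = -1)).card ∧ p = (0, g)} := by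
  have hset : {ab : (Fin n → ℝ) × (Fin n → ℝ) |
        ∀ i : Fin n, ∀ s t : ℝ, (s = -1 ∨ s = 1) → (t = -1 ∨ t = 1) →
          0 ≤ 1 + s * ab.1 i + t * ab.1 (i + 1) + s * t * ab.2 i} = Stmt18Aux.ND n := rfl
  rw [hset]
  ext p
  constructor
  · intro h
    obtain ⟨a, b⟩ := p
    exact Stmt18Aux.forward hn h
  · rintro (⟨α, hα, rfl⟩ | ⟨g, hg, hodd, rfl⟩)
    · exact Stmt18Aux.det_extreme hα
    · exact Stmt18Aux.ctx_extreme hg hodd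
end
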